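/- arXiv:1911.07011 — 8 statements merged into one kernel-verified Lean document; each statement's English description precedes it below -/
import Mathlib

section
/- Let (A_1,B_1),...,(A_m,B_m) be pairs of finite sets with |A_i| = a and |B_i| = b for every 1 ≤ i ≤ m. Suppose that A_i ∩ B_i = ∅ for all 1 ≤ i ≤ m, and A_i ∩ B_j ≠ ∅ for all i ≠ j. Then m ≤ C(a+b, a), where C denotes the binomial coefficient. -/
/-!
Lovász's induction on the ground set `X` proves the weighted inequality
`∑ᵢ 1 / C(|Aᵢ| + |Bᵢ|, |Aᵢ|) ≤ 1`. For `x ∈ X`, the pairs `(Aᵢ, Bᵢ \ {x})` with `x ∉ Aᵢ` again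
form a set-pair system, on `X \ {x}`. Summing the resulting inequalities over all `x ∈ X`
counts each pair `|X|` times with its own weight, since `b / C(a + b - 1, a) = (a + b) / C(a + b, a)`;
dividing by `|X|` closes the induction.
-/

open Finset

section

variable {ι α : Type*}

structure IsSetPairSystem (s : Finset ι) (A B : ι → Finset α) : Prop where
  disjoint : ∀ i ∈ s, Disjoint (A i) (B i)
  not_disjoint : ∀ i ∈ s, ∀ j ∈ s, i ≠ j → ¬Disjoint (A i) (B j)

variable {s : Finset ι} {A B : ι → Finset α}

lemma IsSetPairSystem.eq_singleton_of_eq_empty (h : IsSetPairSystem s A B) {i : ι} (hi : i ∈ s)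
    (hB : B i = ∅) : s = {i} :=
  eq_singleton_iff_unique_mem.2 ⟨hi, fun j hj ↦ by_contra fun hji ↦
    h.not_disjoint j hj i hi hji (by simp [hB])⟩

def pairWeight (A B : Finset α) : ℚ := ((#A + #B).choose #A : ℚ)⁻¹

lemma succ_mul_inv_choose_add (a b : ℕ) :
    (b + 1 : ℚ) * ((a + b).choose a : ℚ)⁻¹ = (a + b + 1) * ((a + b + 1).choose a : ℚ)⁻¹ := by
  have key := Nat.choose_mul_succ_eq (a + b) a
  rw [show a + b + 1 - a = b + 1 by omega] at key
  have h₁ : ((a + b).choose a : ℚ) ≠ 0 := by exact_mod_cast (Nat.choose_pos (by omega)).ne'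
  have h₂ : ((a + b + 1).choose a : ℚ) ≠ 0 := by exact_mod_cast (Nat.choose_pos (by omega)).ne'
  field_simp
  rw [mul_comm]
  exact_mod_cast key.symm

variable [DecidableEq α]

lemma IsSetPairSystem.erase (h : IsSetPairSystem s A B) (x : α) :
    IsSetPairSystem {i ∈ s | x ∉ A i} A (fun i ↦ (B i).erase x) where
  disjoint i hi := (h.disjoint i (mem_filter.1 hi).1).mono_right (erase_subset _ _)
  not_disjoint i hi j hj hij hAB := by
    rw [mem_filter] at hi hj
    rw [← disjoint_erase_comm, erase_eq_of_notMem hi.2] at hAB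
    exact h.not_disjoint i hi.1 j hj.1 hij hAB

lemma sum_pairWeight_erase {X A B : Finset α} (hAB : Disjoint A B) (hAX : A ⊆ X) (hBX : B ⊆ X)
    (hB : B.Nonempty) : ∑ x ∈ X \ A, pairWeight A (B.erase x) = #X * pairWeight A B := by
  have hBXA : B ⊆ X \ A := subset_sdiff.2 ⟨hBX, hAB.symm⟩
  obtain ⟨b, hb⟩ : ∃ b, #B = b + 1 := Nat.exists_eq_add_one.2 hB.card_pos
  have hcard : #((X \ A) \ B) + #A + #B = #X := by
    have := card_le_card hBXA
    have := card_le_card hAX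
    rw [card_sdiff_of_subset hBXA, card_sdiff_of_subset hAX] at *
    omega
  have hout : ∑ x ∈ (X \ A) \ B, pairWeight A (B.erase x) = #((X \ A) \ B) * pairWeight A B := by
    rw [← nsmul_eq_mul, ← sum_const]
    exact sum_congr rfl fun x hx ↦ by rw [erase_eq_of_notMem (mem_sdiff.1 hx).2]
  have hin : ∑ x ∈ B, pairWeight A (B.erase x) = #B * ((#A + b).choose #A : ℚ)⁻¹ := by
    rw [← nsmul_eq_mul, ← sum_const]
    exact sum_congr rfl fun x hx ↦ by rw [pairWeight, card_erase_of_mem hx, hb, Nat.add_sub_cancel]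
  rw [← sum_sdiff hBXA, hout, hin, ← hcard, pairWeight, hb]
  push_cast
  linear_combination succ_mul_inv_choose_add (#A) b

theorem IsSetPairSystem.sum_pairWeight_le_one_of_subset {X : Finset α} (h : IsSetPairSystem s A B)
    (hX : ∀ i ∈ s, A i ∪ B i ⊆ X) :
    ∑ i ∈ s, pairWeight (A i) (B i) ≤ 1 := by
  induction X using Finset.strongInduction generalizing s B with
  | H X ih =>
  obtain rfl | ⟨i₀, hi₀⟩ := s.eq_empty_or_nonempty
  · simp
  -- An empty `B i` would break `sum_pairWeight_erase`, but it forces `s = {i}`.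
  by_cases hB : ∃ i ∈ s, B i = ∅
  · obtain ⟨i, hi, hBi⟩ := hB
    simp [h.eq_singleton_of_eq_empty hi hBi, hBi, pairWeight]
  push Not at hB
  have hX₀ : 0 < #X := card_pos.2 <| (hB i₀ hi₀).mono (subset_union_right.trans (hX i₀ hi₀))
  have hstep (x : α) (hx : x ∈ X) :
      ∑ i ∈ s with x ∉ A i, pairWeight (A i) ((B i).erase x) ≤ 1 := by
    refine ih _ (erase_ssubset hx) (h.erase x) fun i hi ↦ ?_
    rw [← erase_eq_of_notMem (mem_filter.1 hi).2, ← erase_union_distrib]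
    exact erase_subset_erase x (hX i (mem_filter.1 hi).1)
  have hdouble : #X * ∑ i ∈ s, pairWeight (A i) (B i) ≤ #X * 1 := calc
    #X * ∑ i ∈ s, pairWeight (A i) (B i)
        = ∑ i ∈ s, ∑ x ∈ X \ A i, pairWeight (A i) ((B i).erase x) := by
      rw [mul_sum]
      refine sum_congr rfl fun i hi ↦ (sum_pairWeight_erase (h.disjoint i hi) ?_ ?_ ?_).symm
      · exact subset_union_left.trans (hX i hi)
      · exact subset_union_right.trans (hX i hi)
      · exact hB i hi
    _ = ∑ x ∈ X, ∑ i ∈ s with x ∉ A i, pairWeight (A i) ((B i).erase x) :=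
      sum_comm' fun i x ↦ by simp only [mem_sdiff, mem_filter]; tauto
    _ ≤ ∑ x ∈ X, 1 := sum_le_sum hstep
    _ = #X * 1 := by simp
  exact le_of_mul_le_mul_left hdouble (by exact_mod_cast hX₀)

theorem IsSetPairSystem.sum_pairWeight_le_one (h : IsSetPairSystem s A B) :
    ∑ i ∈ s, pairWeight (A i) (B i) ≤ 1 :=
  h.sum_pairWeight_le_one_of_subset fun _ hi ↦ subset_biUnion_of_mem (fun i ↦ A i ∪ B i) hi

end

/-- Bollobás's theorem on cross-intersecting set-pair systems. -/
theorem bollobas_set_pairs {α : Type*} [DecidableEq α] (m a b : ℕ)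
    (A B : Fin m → Finset α)
    (hA : ∀ i, (A i).card = a) (hB : ∀ i, (B i).card = b)
    (hdisj : ∀ i, A i ∩ B i = ∅)
    (hcross : ∀ i j, i ≠ j → (A i ∩ B j).Nonempty) :
    m ≤ (a + b).choose a := by
  have hsys : IsSetPairSystem univ A B :=
    ⟨fun i _ ↦ disjoint_iff_inter_eq_empty.2 (hdisj i),
      fun i _ j _ hij ↦ not_disjoint_iff_nonempty_inter.2 (hcross i j hij)⟩
  have hsum := hsys.sum_pairWeight_le_one
  simp only [pairWeight, hA, hB, sum_const, card_univ, Fintype.card_fin, nsmul_eq_mul] at hsum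
  have hC : (0 : ℚ) < (a + b).choose a := by exact_mod_cast Nat.choose_pos (by omega)
  exact_mod_cast (mul_inv_le_iff₀ hC).1 hsum |>.trans_eq (one_mul _)
end

section
/- Let (A_1,B_1),...,(A_m,B_m) be pairs of finite sets with |A_i| = a and |B_i| = b for every 1 ≤ i ≤ m, such that A_i ∩ B_i = ∅ for all i and A_i ∩ B_j ≠ ∅ for all i ≠ j. Then m = C(a+b, a) holds if and only if there is a set X of cardinality a+b such that {A_1,...,A_m} is the family of all a-element subsets of X and B_i = X \ A_i for each i. -/
section helpers


lemma card_equiv_fiber {γ δ κ : Type*} [Fintype γ] [Fintype δ] [Fintype κ]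
    [DecidableEq γ] [DecidableEq δ] [DecidableEq κ] (c : γ → κ) (d : δ → κ)
    (h : ∀ k, Fintype.card {x // c x = k} = Fintype.card {y // d y = k}) :
    Fintype.card {σ : γ ≃ δ // ∀ x, d (σ x) = c x}
      = ∏ k, (Fintype.card {x // c x = k}).factorial := by
  have E : {σ : γ ≃ δ // ∀ x, d (σ x) = c x}
      ≃ ∀ k, ({x // c x = k} ≃ {y // d y = k}) :=
    { toFun := fun σc k => Equiv.subtypeEquiv σc.1 (fun x => by rw [σc.2 x])
      invFun := fun F => ⟨(Equiv.sigmaFiberEquiv c).symm.trans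
          ((Equiv.sigmaCongrRight F).trans (Equiv.sigmaFiberEquiv d)),
        fun x => by
          simp [Equiv.sigmaFiberEquiv, Equiv.sigmaCongrRight]
          exact (F (c x) ⟨x, rfl⟩).2⟩
      left_inv := fun σc => by
        ext x
        simp [Equiv.sigmaFiberEquiv, Equiv.sigmaCongrRight, Equiv.subtypeEquiv]
      right_inv := fun F => by
        funext k
        ext x
        obtain ⟨x, hx⟩ := x
        subst hx
        simp [Equiv.sigmaFiberEquiv, Equiv.sigmaCongrRight, Equiv.subtypeEquiv] }
  rw [Fintype.card_congr E, Fintype.card_pi]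
  exact Finset.prod_congr rfl fun k _ => Fintype.card_equiv (Fintype.equivOfCardEq (h k))


lemma exists_orderly {γ : Type*} [Fintype γ] [DecidableEq γ] (w : γ → ℕ) :
    ∃ σ : γ ≃ Fin (Fintype.card γ), ∀ p q, w p < w q → σ p < σ q := by
  cases isEmpty_or_nonempty γ with
  | inl h => exact ⟨Fintype.equivFin γ, fun p => (IsEmpty.false p).elim⟩
  | inr h =>
    set n := Fintype.card γ with hn
    have hnpos : 0 < n := Fintype.card_pos
    let e : γ ≃ Fin n := Fintype.equivFin γ
    let key : γ → ℕ := fun g => w g * n + (e g : ℕ)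
    have hkeylt : ∀ p q, w p < w q → key p < key q := by
      intro p q hpq
      calc key p < (w p + 1) * n := by
            simp only [key, add_mul, one_mul]
            exact Nat.add_lt_add_left (e p).2 _
        _ ≤ w q * n := Nat.mul_le_mul_right _ hpq
        _ ≤ key q := Nat.le_add_right _ _
    have hkeyinj : Function.Injective key := by
      intro p q hpq
      have hmod : (e p : ℕ) = (e q : ℕ) := by
        have := congrArg (· % n) hpq
        simpa [key, Nat.mul_add_mod', Nat.mod_eq_of_lt (e p).2,
          Nat.mod_eq_of_lt (e q).2] using this
      exact e.injective (Fin.ext hmod)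
    let T : Finset ℕ := Finset.image key Finset.univ
    have hT : T.card = n := by
      rw [Finset.card_image_of_injective _ hkeyinj, Finset.card_univ]
    let iso := T.orderIsoOfFin hT
    let f : γ → Fin n := fun g =>
      iso.symm ⟨key g, Finset.mem_image_of_mem _ (Finset.mem_univ g)⟩
    have hfinj : Function.Injective f := by
      intro p q hpq
      have := iso.symm.injective hpq
      exact hkeyinj (congrArg Subtype.val this)
    have hfbij : Function.Bijective f := (Fintype.bijective_iff_injective_and_card f).mpr ⟨hfinj, by simp [hn]⟩
    refine ⟨Equiv.ofBijective f hfbij, fun p q hpq => ?_⟩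
    have : (⟨key p, Finset.mem_image_of_mem _ (Finset.mem_univ p)⟩ : T)
        < ⟨key q, Finset.mem_image_of_mem _ (Finset.mem_univ q)⟩ :=
      Subtype.mk_lt_mk.2 (hkeylt p q hpq)
    exact iso.symm.strictMono this


lemma sum_three {β : Type*} [Fintype β] [DecidableEq β] (e : β → Fin 3) :
    (Finset.univ.filter (fun y => e y = 0)).card
      + (Finset.univ.filter (fun y => e y = 1)).card
      + (Finset.univ.filter (fun y => e y = 2)).card = Fintype.card β := by
  have h := Finset.card_eq_sum_card_fiberwise
    (f := e) (s := Finset.univ) (t := Finset.univ) (fun x _ => Finset.mem_univ _)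
  rw [Finset.card_univ] at h
  rw [h, Fin.sum_univ_three]


lemma card_D (n a b : ℕ) (hab : a + b ≤ n) :
    (Finset.univ.filter (fun d : Fin n → Fin 3 =>
      (Finset.univ.filter (fun y => d y = 0)).card = a ∧
      (Finset.univ.filter (fun y => d y = 1)).card = b ∧
      ∀ u v, d u = 0 → d v = 1 → u < v)).card = n.choose (a + b) := by
  have key : (Finset.univ.filter (fun d : Fin n → Fin 3 =>
      (Finset.univ.filter (fun y => d y = 0)).card = a ∧
      (Finset.univ.filter (fun y => d y = 1)).card = b ∧
      ∀ u v, d u = 0 → d v = 1 → u < v)).card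
      = ((Finset.univ : Finset (Fin n)).powersetCard (a + b)).card := by
    apply Finset.card_bij (fun d _ =>
      Finset.univ.filter (fun y => d y = 0) ∪ Finset.univ.filter (fun y => d y = 1))
    · -- maps into powersetCard
      intro d hd
      simp only [Finset.mem_filter] at hd
      obtain ⟨-, h0, h1, -⟩ := hd
      rw [Finset.mem_powersetCard]
      refine ⟨Finset.subset_univ _, ?_⟩
      rw [Finset.card_union_of_disjoint, h0, h1]
      rw [Finset.disjoint_filter]
      intro y _ hy0 hy1
      rw [hy0] at hy1
      exact absurd hy1 (by decide)
    · -- injective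
      intro d hd d' hd' hW
      simp only [Finset.mem_filter] at hd hd'
      obtain ⟨-, h0, h1, hlt⟩ := hd
      obtain ⟨-, h0', h1', hlt'⟩ := hd'
      by_cases h : Finset.univ.filter (fun y => d y = 0) = Finset.univ.filter (fun y => d' y = 0)
      · funext y
        by_cases hy0 : d y = 0
        · have : y ∈ Finset.univ.filter (fun y => d' y = 0) := by
            rw [← h]; simp [hy0]
          simp only [Finset.mem_filter] at this
          rw [hy0, this.2]
        · by_cases hy1 : d y = 1
          · have hyW : y ∈ Finset.univ.filter (fun y => d' y = 0) ∪ Finset.univ.filter (fun y => d' y = 1) := by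
              rw [← hW]; simp [hy1]
            have hyn0 : ¬ d' y = 0 := by
              intro h'
              have : y ∈ Finset.univ.filter (fun y => d y = 0) := by
                rw [h]; simp [h']
              simp only [Finset.mem_filter] at this
              rw [this.2] at hy1; exact absurd hy1 (by decide)
            simp only [Finset.mem_union, Finset.mem_filter, Finset.mem_univ, true_and] at hyW
            rcases hyW with h' | h'
            · exact absurd h' hyn0
            · rw [hy1, h']
          · have hy2 : d y = 2 := by omega
            have hyW : y ∉ Finset.univ.filter (fun y => d y = 0) ∪ Finset.univ.filter (fun y => d y = 1) := by
              simp [hy0, hy1]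
            rw [hW] at hyW
            simp only [Finset.mem_union, Finset.mem_filter, Finset.mem_univ, true_and] at hyW
            push_neg at hyW
            have : d' y = 2 := by omega
            rw [hy2, this]
      · exfalso
        have hne1 : (Finset.univ.filter (fun y => d y = 0) \ Finset.univ.filter (fun y => d' y = 0)).Nonempty := by
          rw [Finset.sdiff_nonempty]
          intro hsub
          exact h (Finset.eq_of_subset_of_card_le hsub (by rw [h0, h0']))
        have hne2 : (Finset.univ.filter (fun y => d' y = 0) \ Finset.univ.filter (fun y => d y = 0)).Nonempty := by
          rw [Finset.sdiff_nonempty]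
          intro hsub
          exact h ((Finset.eq_of_subset_of_card_le hsub (by rw [h0, h0'])).symm)
        obtain ⟨u, hu⟩ := hne1
        obtain ⟨v, hv⟩ := hne2
        simp only [Finset.mem_sdiff, Finset.mem_filter, Finset.mem_univ, true_and] at hu hv
        have huW : u ∈ Finset.univ.filter (fun y => d' y = 0) ∪ Finset.univ.filter (fun y => d' y = 1) := by
          rw [← hW]; simp [hu.1]
        have hvW : v ∈ Finset.univ.filter (fun y => d y = 0) ∪ Finset.univ.filter (fun y => d y = 1) := by
          rw [hW]; simp [hv.1]
        simp only [Finset.mem_union, Finset.mem_filter, Finset.mem_univ, true_and] at huW hvW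
        have hu1 : d' u = 1 := by rcases huW with h' | h'; exact absurd h' hu.2; exact h'
        have hv1 : d v = 1 := by rcases hvW with h' | h'; exact absurd h' hv.2; exact h'
        have := hlt u v hu.1 hv1
        have := hlt' v u hv.1 hu1
        omega
    · -- surjective
      intro W hW
      rw [Finset.mem_powersetCard] at hW
      obtain ⟨-, hWcard⟩ := hW
      set iso := W.orderIsoOfFin hWcard with hiso
      set d : Fin n → Fin 3 := fun y =>
        if h : y ∈ W then (if ((iso.symm ⟨y, h⟩ : Fin (a+b)) : ℕ) < a then 0 else 1) else 2 with hd
      have hmem0 : ∀ y, d y = 0 ↔ ∃ h : y ∈ W, ((iso.symm ⟨y, h⟩ : Fin (a+b)) : ℕ) < a := by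
        intro y
        simp only [hd]
        constructor
        · intro hy
          by_cases h : y ∈ W
          · rw [dif_pos h] at hy
            refine ⟨h, ?_⟩
            by_contra hlt
            rw [if_neg hlt] at hy
            exact absurd hy (by decide)
          · rw [dif_neg h] at hy
            exact absurd hy (by decide)
        · intro ⟨h, hlt⟩
          simp only [dif_pos h, if_pos hlt]
      have hmem1 : ∀ y, d y = 1 ↔ ∃ h : y ∈ W, ¬ ((iso.symm ⟨y, h⟩ : Fin (a+b)) : ℕ) < a := by
        intro y
        simp only [hd]
        constructor
        · intro hy
          by_cases h : y ∈ W
          · rw [dif_pos h] at hy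
            refine ⟨h, ?_⟩
            by_contra hlt
            rw [if_pos hlt] at hy
            exact absurd hy (by decide)
          · rw [dif_neg h] at hy
            exact absurd hy (by decide)
        · intro ⟨h, hlt⟩
          simp only [dif_pos h, if_neg hlt]
      have himg0 : Finset.image Fin.val (Finset.univ.filter (fun y => d y = 0))
          = Finset.image (fun i : Fin (a+b) => ((iso i : Fin n) : ℕ))
              (Finset.univ.filter (fun i : Fin (a+b) => (i : ℕ) < a)) := by
        ext k
        simp only [Finset.mem_image, Finset.mem_filter, Finset.mem_univ, true_and]
        constructor
        · rintro ⟨y, hy, rfl⟩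
          obtain ⟨h, hlt⟩ := (hmem0 y).1 hy
          exact ⟨iso.symm ⟨y, h⟩, hlt, by rw [iso.apply_symm_apply]⟩
        · rintro ⟨i, hlt, rfl⟩
          refine ⟨iso i, (hmem0 _).2 ⟨(iso i).2, ?_⟩, rfl⟩
          rw [show (⟨(iso i : Fin n), (iso i).2⟩ : {x // x ∈ W}) = iso i from rfl]
          rw [iso.symm_apply_apply]
          exact hlt
      have hcard0 : (Finset.univ.filter (fun y => d y = 0)).card = a := by
        have hinj : Function.Injective (fun i : Fin (a+b) => ((iso i : Fin n) : ℕ)) := by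
          intro i j hij
          exact iso.injective (Subtype.ext (Fin.ext hij))
        have := congrArg Finset.card himg0
        rw [Finset.card_image_of_injective _ Fin.val_injective,
          Finset.card_image_of_injective _ hinj] at this
        rw [this]
        have : Finset.image Fin.val (Finset.univ.filter (fun i : Fin (a+b) => (i : ℕ) < a))
            = Finset.range a := by
          ext k
          simp only [Finset.mem_image, Finset.mem_filter, Finset.mem_univ, true_and,
            Finset.mem_range]
          constructor
          · rintro ⟨i, hi, rfl⟩; exact hi
          · intro hk
            exact ⟨⟨k, by omega⟩, hk, rfl⟩
        rw [← Finset.card_image_of_injective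
          (Finset.univ.filter (fun i : Fin (a+b) => (i : ℕ) < a)) Fin.val_injective, this,
          Finset.card_range]
      have himg1 : Finset.image Fin.val (Finset.univ.filter (fun y => d y = 1))
          = Finset.image (fun i : Fin (a+b) => ((iso i : Fin n) : ℕ))
              (Finset.univ.filter (fun i : Fin (a+b) => ¬ (i : ℕ) < a)) := by
        ext k
        simp only [Finset.mem_image, Finset.mem_filter, Finset.mem_univ, true_and]
        constructor
        · rintro ⟨y, hy, rfl⟩
          obtain ⟨h, hlt⟩ := (hmem1 y).1 hy
          exact ⟨iso.symm ⟨y, h⟩, hlt, by rw [iso.apply_symm_apply]⟩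
        · rintro ⟨i, hlt, rfl⟩
          refine ⟨iso i, (hmem1 _).2 ⟨(iso i).2, ?_⟩, rfl⟩
          rw [show (⟨(iso i : Fin n), (iso i).2⟩ : {x // x ∈ W}) = iso i from rfl]
          rw [iso.symm_apply_apply]
          exact hlt
      have hcard1 : (Finset.univ.filter (fun y => d y = 1)).card = b := by
        have hinj : Function.Injective (fun i : Fin (a+b) => ((iso i : Fin n) : ℕ)) := by
          intro i j hij
          exact iso.injective (Subtype.ext (Fin.ext hij))
        have := congrArg Finset.card himg1
        rw [Finset.card_image_of_injective _ Fin.val_injective,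
          Finset.card_image_of_injective _ hinj] at this
        rw [this]
        have : Finset.image Fin.val (Finset.univ.filter (fun i : Fin (a+b) => ¬ (i : ℕ) < a))
            = Finset.Ico a (a+b) := by
          ext k
          simp only [Finset.mem_image, Finset.mem_filter, Finset.mem_univ, true_and,
            Finset.mem_Ico]
          constructor
          · rintro ⟨i, hi, rfl⟩; exact ⟨by omega, i.2⟩
          · intro ⟨hk1, hk2⟩
            exact ⟨⟨k, hk2⟩, not_lt.mpr hk1, rfl⟩
        rw [← Finset.card_image_of_injective
          (Finset.univ.filter (fun i : Fin (a+b) => ¬ (i : ℕ) < a)) Fin.val_injective, this,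
          Nat.card_Ico]
        omega
      refine ⟨d, ?_, ?_⟩
      · simp only [Finset.mem_filter, Finset.mem_univ, true_and]
        refine ⟨hcard0, hcard1, ?_⟩
        intro u v hu hv
        obtain ⟨hu', hult⟩ := (hmem0 u).1 hu
        obtain ⟨hv', hvlt⟩ := (hmem1 v).1 hv
        have hlt2 : iso.symm ⟨u, hu'⟩ < iso.symm ⟨v, hv'⟩ := by
          rw [Fin.lt_iff_val_lt_val]; omega
        have h2 := iso.strictMono hlt2
        rw [iso.apply_symm_apply, iso.apply_symm_apply] at h2
        exact Subtype.mk_lt_mk.1 h2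
      · ext y
        simp only [Finset.mem_union, Finset.mem_filter, Finset.mem_univ, true_and]
        constructor
        · rintro (hy | hy)
          · exact ((hmem0 y).1 hy).fst
          · exact ((hmem1 y).1 hy).fst
        · intro hy
          by_cases hlt : ((iso.symm ⟨y, hy⟩ : Fin (a+b)) : ℕ) < a
          · exact Or.inl ((hmem0 y).2 ⟨hy, hlt⟩)
          · exact Or.inr ((hmem1 y).2 ⟨hy, hlt⟩)
  rw [key, Finset.card_powersetCard, Finset.card_univ, Fintype.card_fin]
lemma card_orderEvent {γ : Type*} [Fintype γ] [DecidableEq γ] {a b : ℕ}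
    (P Q : Finset γ) (hPQ : Disjoint P Q) (hP : P.card = a) (hQ : Q.card = b) :
    (Finset.univ.filter
      (fun σ : γ ≃ Fin (Fintype.card γ) => ∀ p ∈ P, ∀ q ∈ Q, σ p < σ q)).card
      * (a + b).choose a = (Fintype.card γ).factorial := by
  classical
  set n := Fintype.card γ with hn
  have hab : a + b ≤ n := by
    rw [← hP, ← hQ, ← Finset.card_union_of_disjoint hPQ, hn, ← Finset.card_univ]
    exact Finset.card_le_card (Finset.subset_univ _)
  set c : γ → Fin 3 := fun x => if x ∈ P then 0 else if x ∈ Q then 1 else 2 with hc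
  have hc0 : ∀ x, c x = 0 ↔ x ∈ P := by
    intro x
    by_cases hp : x ∈ P
    · simp only [hc, if_pos hp]
      exact ⟨fun _ => hp, fun _ => trivial⟩
    · by_cases hq : x ∈ Q
      · simp only [hc, if_neg hp, if_pos hq]
        exact ⟨fun h => absurd h (by decide), fun h => absurd h hp⟩
      · simp only [hc, if_neg hp, if_neg hq]
        exact ⟨fun h => absurd h (by decide), fun h => absurd h hp⟩
  have hc1 : ∀ x, c x = 1 ↔ x ∈ Q := by
    intro x
    by_cases hp : x ∈ P
    · have hq : x ∉ Q := Finset.disjoint_left.1 hPQ hp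
      simp only [hc, if_pos hp]
      exact ⟨fun h => absurd h (by decide), fun h => absurd h hq⟩
    · by_cases hq : x ∈ Q
      · simp only [hc, if_neg hp, if_pos hq]
        exact ⟨fun _ => hq, fun _ => trivial⟩
      · simp only [hc, if_neg hp, if_neg hq]
        exact ⟨fun h => absurd h (by decide), fun h => absurd h hq⟩
  have hcP : (Finset.univ.filter (fun x => c x = 0)) = P := by
    ext x; simp [hc0]
  have hcQ : (Finset.univ.filter (fun x => c x = 1)) = Q := by
    ext x; simp [hc1]
  set D : Finset (Fin n → Fin 3) := Finset.univ.filter (fun d =>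
      (Finset.univ.filter (fun y => d y = 0)).card = a ∧
      (Finset.univ.filter (fun y => d y = 1)).card = b ∧
      ∀ u v, d u = 0 → d v = 1 → u < v) with hD
  set E : Finset (γ ≃ Fin n) := Finset.univ.filter
      (fun σ => ∀ p ∈ P, ∀ q ∈ Q, σ p < σ q) with hE
  have hmaps : ∀ σ ∈ E, (fun y => c (σ.symm y)) ∈ D := by
    intro σ hσ
    rw [hE, Finset.mem_filter] at hσ
    rw [hD, Finset.mem_filter]
    refine ⟨Finset.mem_univ _, ?_, ?_, ?_⟩
    · rw [show (Finset.univ.filter (fun y => c (σ.symm y) = 0)) = P.image σ by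
        ext y
        simp only [Finset.mem_filter, Finset.mem_univ, true_and, Finset.mem_image, hc0]
        constructor
        · intro h; exact ⟨σ.symm y, h, σ.apply_symm_apply y⟩
        · rintro ⟨x, hx, rfl⟩; rwa [σ.symm_apply_apply]]
      rw [Finset.card_image_of_injective _ σ.injective, hP]
    · rw [show (Finset.univ.filter (fun y => c (σ.symm y) = 1)) = Q.image σ by
        ext y
        simp only [Finset.mem_filter, Finset.mem_univ, true_and, Finset.mem_image, hc1]
        constructor
        · intro h; exact ⟨σ.symm y, h, σ.apply_symm_apply y⟩
        · rintro ⟨x, hx, rfl⟩; rwa [σ.symm_apply_apply]]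
      rw [Finset.card_image_of_injective _ σ.injective, hQ]
    · intro u v hu hv
      rw [hc0] at hu
      rw [hc1] at hv
      have := hσ.2 _ hu _ hv
      rwa [σ.apply_symm_apply, σ.apply_symm_apply] at this
  have hfiber : ∀ d ∈ D, (E.filter (fun σ => (fun y => c (σ.symm y)) = d)).card
      = a.factorial * b.factorial * (n - a - b).factorial := by
    intro d hd
    rw [hD, Finset.mem_filter] at hd
    obtain ⟨-, hd0, hd1, hdlt⟩ := hd
    have heq : E.filter (fun σ => (fun y => c (σ.symm y)) = d)
        = Finset.univ.filter (fun σ : γ ≃ Fin n => ∀ x, d (σ x) = c x) := by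
      ext σ
      simp only [hE, Finset.mem_filter, Finset.mem_univ, true_and]
      constructor
      · rintro ⟨hEσ, hΦ⟩
        intro x
        have := congrFun hΦ (σ x)
        rw [← this, σ.symm_apply_apply]
      · intro hcompat
        refine ⟨?_, ?_⟩
        · intro p hp q hq
          have h1 : d (σ p) = 0 := by rw [hcompat p, hc0]; exact hp
          have h2 : d (σ q) = 1 := by rw [hcompat q, hc1]; exact hq
          exact hdlt _ _ h1 h2
        · funext y
          have := hcompat (σ.symm y)
          rw [σ.apply_symm_apply] at this
          exact this.symm
      -- done
    rw [heq]
    have hcards : ∀ k, Fintype.card {x // c x = k} = Fintype.card {y // d y = k} := by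
      have hsumc := sum_three c
      have hsumd := sum_three d
      rw [Fintype.card_fin] at hsumd
      intro k
      rw [Fintype.card_subtype, Fintype.card_subtype]
      fin_cases k
      · show (Finset.univ.filter (fun x => c x = 0)).card = (Finset.univ.filter (fun y => d y = 0)).card
        rw [hcP, hd0, hP]
      · show (Finset.univ.filter (fun x => c x = 1)).card = (Finset.univ.filter (fun y => d y = 1)).card
        rw [hcQ, hd1, hQ]
      · show (Finset.univ.filter (fun x => c x = 2)).card = (Finset.univ.filter (fun y => d y = 2)).card
        rw [hcP, hcQ, hP, hQ] at hsumc
        rw [hd0, hd1] at hsumd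
        rw [← hn] at hsumc
        omega
    have := card_equiv_fiber c d hcards
    rw [Fin.prod_univ_three] at this
    rw [← Fintype.card_subtype (p := fun σ : γ ≃ Fin n => ∀ x, d (σ x) = c x)]
    rw [this]
    rw [Fintype.card_subtype, Fintype.card_subtype, Fintype.card_subtype, hcP, hcQ, hP, hQ]
    congr 2
    have hsumc := sum_three c
    rw [hcP, hcQ, hP, hQ, ← hn] at hsumc
    omega
  have hEcard : E.card = n.choose (a + b)
      * (a.factorial * b.factorial * (n - a - b).factorial) := by
    rw [Finset.card_eq_sum_card_fiberwise hmaps]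
    rw [Finset.sum_congr rfl hfiber, Finset.sum_const, hD, card_D n a b hab, smul_eq_mul]
  rw [hEcard]
  have e1 : (a + b).choose a * a.factorial * b.factorial = (a + b).factorial := by
    have := Nat.choose_mul_factorial_mul_factorial (Nat.le_add_right a b)
    rwa [Nat.add_sub_cancel_left] at this
  have e2 : n.choose (a + b) * (a + b).factorial * (n - (a + b)).factorial
      = n.factorial := Nat.choose_mul_factorial_mul_factorial hab
  calc n.choose (a + b) * (a.factorial * b.factorial * (n - a - b).factorial)
        * (a + b).choose a
      = n.choose (a + b) * (((a + b).choose a * a.factorial * b.factorial)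
          * (n - (a + b)).factorial) := by rw [Nat.sub_sub]; ring
    _ = n.factorial := by rw [e1, ← mul_assoc, e2]
end helpers
theorem bollobas_aux {γ : Type*} [Fintype γ] [DecidableEq γ] (m a b : ℕ)
    (A B : Fin m → Finset γ)
    (hA : ∀ i, (A i).card = a) (hB : ∀ i, (B i).card = b)
    (hdisj : ∀ i, A i ∩ B i = ∅)
    (hcross : ∀ i j, i ≠ j → (A i ∩ B j).Nonempty)
    (hm : m = (a + b).choose a) :
    ∃ X : Finset γ, X.card = a + b ∧
      Set.range A = ↑(X.powersetCard a) ∧ ∀ i, B i = X \ A i := by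
  classical
  set n := Fintype.card γ with hn
  have hABd : ∀ i, Disjoint (A i) (B i) := fun i =>
    Finset.disjoint_iff_inter_eq_empty.2 (hdisj i)
  have hnotmem : ∀ i {z}, z ∈ B i → z ∉ A i := by
    intro i z hzB hzA
    have h2 : z ∈ A i ∩ B i := Finset.mem_inter.2 ⟨hzA, hzB⟩
    rw [hdisj i] at h2
    exact absurd h2 (Finset.notMem_empty z)
  have hAinj : Function.Injective A := by
    intro i j h
    by_contra hne
    obtain ⟨t, ht⟩ := hcross i j hne
    rw [Finset.mem_inter, h] at ht
    exact hnotmem j ht.2 ht.1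
  set E : Fin m → Finset (γ ≃ Fin n) := fun i => Finset.univ.filter
    (fun σ => ∀ p ∈ A i, ∀ q ∈ B i, σ p < σ q) with hE
  have hEmem : ∀ i (σ : γ ≃ Fin n), σ ∈ E i ↔ ∀ p ∈ A i, ∀ q ∈ B i, σ p < σ q := by
    intro i σ
    rw [hE]
    simp only [Finset.mem_filter, Finset.mem_univ, true_and]
  have hEdisj : ∀ i j, i ≠ j → Disjoint (E i) (E j) := by
    intro i j hij
    rw [Finset.disjoint_left]
    intro σ hσi hσj
    rw [hEmem] at hσi hσj
    obtain ⟨t, ht⟩ := hcross i j hij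
    obtain ⟨s, hs⟩ := hcross j i (fun h => hij h.symm)
    rw [Finset.mem_inter] at ht hs
    exact lt_asymm (hσi t ht.1 s hs.2) (hσj s hs.1 t ht.2)
  have hCpos : 0 < (a + b).choose a := Nat.choose_pos (Nat.le_add_right a b)
  have hEcard : ∀ i, (E i).card * (a + b).choose a = n.factorial := fun i =>
    card_orderEvent (A i) (B i) (hABd i) (hA i) (hB i)
  -- covering
  have hcover : ∀ σ : γ ≃ Fin n, ∃ i, σ ∈ E i := by
    have hsum : (∑ i, (E i).card) * (a + b).choose a
        = n.factorial * (a + b).choose a := by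
      rw [Finset.sum_mul, Finset.sum_congr rfl (fun i _ => hEcard i),
        Finset.sum_const, Finset.card_univ, Fintype.card_fin, smul_eq_mul, hm,
        mul_comm]
    have hsum' : (∑ i, (E i).card) = n.factorial :=
      Nat.eq_of_mul_eq_mul_right hCpos hsum
    have hbi : (Finset.univ.biUnion E).card = n.factorial := by
      rw [Finset.card_biUnion (fun i _ j _ hij => hEdisj i j hij), hsum']
    have htot : Fintype.card (γ ≃ Fin n) = n.factorial :=
      Fintype.card_equiv (Fintype.equivFin γ)
    have huniv : Finset.univ.biUnion E = Finset.univ :=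
      Finset.eq_univ_of_card _ (by rw [hbi, htot])
    intro σ
    have : σ ∈ Finset.univ.biUnion E := by rw [huniv]; exact Finset.mem_univ σ
    obtain ⟨i, -, hi⟩ := Finset.mem_biUnion.1 this
    exact ⟨i, hi⟩
  -- the swap lemma
  have hswap : ∀ (i : Fin m) x y, x ∈ A i → y ∈ B i →
      ∃ j, A j = insert y ((A i).erase x) ∧ B j = insert x ((B i).erase y) := by
    intro i x y hx hy
    have hyx : y ≠ x := fun h => hnotmem i hy (h ▸ hx)
    have hxA : x ∉ B i := fun h => hnotmem i h hx
    -- first ordering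
    set w1 : γ → ℕ := fun z => if z = x then 2 else if z = y then 1 else
      if z ∈ A i then 0 else if z ∈ B i then 3 else 4 with hw1
    obtain ⟨σ1, hσ1⟩ := exists_orderly w1
    have hw1x : w1 x = 2 := by simp [hw1]
    have hw1y : w1 y = 1 := by simp [hw1, hyx]
    have hw1A : ∀ z ∈ A i, z ≠ x → w1 z = 0 := by
      intro z hz hzx
      have hzy : z ≠ y := fun h => hnotmem i hy (h ▸ hz)
      simp [hw1, hzx, hzy, hz]
    have hw1B : ∀ z ∈ B i, z ≠ y → 3 ≤ w1 z := by
      intro z hz hzy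
      have hzx : z ≠ x := fun h => hxA (h ▸ hz)
      have hzA : z ∉ A i := hnotmem i hz
      simp [hw1, hzx, hzy, hzA, hz]
    obtain ⟨j, hj⟩ := hcover σ1
    rw [hEmem] at hj
    have hjne : j ≠ i := by
      intro h
      subst h
      exact lt_asymm (hj x hx y hy) (hσ1 y x (by omega))
    obtain ⟨x', hx'⟩ := hcross i j (fun h => hjne h.symm)
    obtain ⟨y', hy'⟩ := hcross j i hjne
    rw [Finset.mem_inter] at hx' hy'
    have hlt1 : σ1 y' < σ1 x' := hj y' hy'.1 x' hx'.2
    have hwx' : w1 x' ≤ 2 := by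
      by_cases h : x' = x
      · rw [h, hw1x]
      · rw [hw1A x' hx'.1 h]; omega
    have hy'y : y' = y := by
      by_contra h
      have h3 := hw1B y' hy'.2 h
      exact lt_asymm hlt1 (hσ1 x' y' (by omega))
    subst hy'y
    have hx'x : x' = x := by
      by_contra h
      have h0 : w1 x' = 0 := hw1A x' hx'.1 h
      exact lt_asymm hlt1 (hσ1 x' y' (by omega))
    subst hx'x
    have hyAj : y' ∈ A j := hy'.1
    have hxBj : x' ∈ B j := hx'.2
    have hAjsub : A j ⊆ insert y' ((A i).erase x') := by
      intro p hp
      have hplt : σ1 p < σ1 x' := hj p hp x' hxBj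
      have hpx : p ≠ x' := fun h => hnotmem j hxBj (h ▸ hp)
      by_cases hpy : p = y'
      · rw [hpy]; exact Finset.mem_insert_self _ _
      · by_cases hpA : p ∈ A i
        · exact Finset.mem_insert_of_mem (Finset.mem_erase.2 ⟨hpx, hpA⟩)
        · exfalso
          have hge : 3 ≤ w1 p := by
            simp only [hw1, if_neg hpx, if_neg hpy, if_neg hpA]
            split <;> omega
          exact lt_asymm hplt (hσ1 x' p (by omega))
    have ha1 : 1 ≤ a := by
      rw [← hA i]; exact Finset.card_pos.2 ⟨x', hx⟩
    have hacard : (insert y' ((A i).erase x')).card = a := by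
      rw [Finset.card_insert_of_notMem (fun h => hnotmem i hy
        (Finset.mem_of_mem_erase h)), Finset.card_erase_of_mem hx, hA i]
      omega
    have hAj : A j = insert y' ((A i).erase x') :=
      Finset.eq_of_subset_of_card_le hAjsub (by rw [hacard, hA j])
    -- second ordering
    set w2 : γ → ℕ := fun z => if z = x' then 3 else if z = y' then 2 else
      if z ∈ A i then 1 else if z ∈ B i then 4 else 0 with hw2
    obtain ⟨σ2, hσ2⟩ := exists_orderly w2
    have hw2x : w2 x' = 3 := by simp [hw2]
    have hw2y : w2 y' = 2 := by simp [hw2, hyx]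
    have hw2A : ∀ z ∈ A i, z ≠ x' → w2 z = 1 := by
      intro z hz hzx
      have hzy : z ≠ y' := fun h => hnotmem i hy (h ▸ hz)
      simp [hw2, hzx, hzy, hz]
    have hw2B : ∀ z ∈ B i, z ≠ y' → w2 z = 4 := by
      intro z hz hzy
      have hzx : z ≠ x' := fun h => hxA (h ▸ hz)
      have hzA : z ∉ A i := hnotmem i hz
      simp [hw2, hzx, hzy, hzA, hz]
    obtain ⟨k, hk⟩ := hcover σ2
    rw [hEmem] at hk
    have hkne : k ≠ i := by
      intro h
      subst h
      exact lt_asymm (hk x' hx y' hy) (hσ2 y' x' (by omega))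
    obtain ⟨x'', hx''⟩ := hcross i k (fun h => hkne h.symm)
    obtain ⟨y'', hy''⟩ := hcross k i hkne
    rw [Finset.mem_inter] at hx'' hy''
    have hlt2 : σ2 y'' < σ2 x'' := hk y'' hy''.1 x'' hx''.2
    have hwx'' : w2 x'' ≤ 3 := by
      by_cases h : x'' = x'
      · rw [h, hw2x]
      · rw [hw2A x'' hx''.1 h]; omega
    have hy''y : y'' = y' := by
      by_contra h
      have h4 := hw2B y'' hy''.2 h
      exact lt_asymm hlt2 (hσ2 x'' y'' (by omega))
    subst hy''y
    have hx''x : x'' = x' := by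
      by_contra h
      have h1 : w2 x'' = 1 := hw2A x'' hx''.1 h
      exact lt_asymm hlt2 (hσ2 x'' y'' (by omega))
    subst hx''x
    have hyAk : y'' ∈ A k := hy''.1
    have hxBk : x'' ∈ B k := hx''.2
    have hBksub : B k ⊆ insert x'' ((B i).erase y'') := by
      intro q hq
      have hqlt : σ2 y'' < σ2 q := hk y'' hyAk q hq
      have hqy : q ≠ y'' := fun h => hnotmem k hq (h ▸ hyAk)
      by_cases hqx : q = x''
      · rw [hqx]; exact Finset.mem_insert_self _ _
      · by_cases hqB : q ∈ B i
        · exact Finset.mem_insert_of_mem (Finset.mem_erase.2 ⟨hqy, hqB⟩)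
        · exfalso
          have hle : w2 q ≤ 1 := by
            simp only [hw2, if_neg hqx, if_neg hqy, if_neg hqB]
            split <;> omega
          exact lt_asymm hqlt (hσ2 q y'' (by omega))
    have hb1 : 1 ≤ b := by
      rw [← hB i]; exact Finset.card_pos.2 ⟨y'', hy⟩
    have hbcard : (insert x'' ((B i).erase y'')).card = b := by
      rw [Finset.card_insert_of_notMem (fun h => hxA
        (Finset.mem_of_mem_erase h)), Finset.card_erase_of_mem hy, hB i]
      omega
    have hBk : B k = insert x'' ((B i).erase y'') :=
      Finset.eq_of_subset_of_card_le hBksub (by rw [hbcard, hB k])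
    -- j = k
    have hjk : j = k := by
      by_contra hne
      obtain ⟨t, ht⟩ := hcross j k hne
      rw [Finset.mem_inter, hAj, hBk] at ht
      obtain ⟨ht1, ht2⟩ := ht
      rw [Finset.mem_insert, Finset.mem_erase] at ht1 ht2
      rcases ht1 with rfl | ⟨htx, htA⟩
      · rcases ht2 with h | ⟨hty, htB⟩
        · exact hyx h
        · exact hty rfl
      · rcases ht2 with rfl | ⟨hty, htB⟩
        · exact htx rfl
        · exact hnotmem i htB htA
    refine ⟨j, hAj, ?_⟩
    rw [hjk]
    exact hBk
  -- m > 0 and the ground set X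
  have hmpos : 0 < m := by rw [hm]; exact hCpos
  set i0 : Fin m := ⟨0, hmpos⟩ with hi0
  set X : Finset γ := A i0 ∪ B i0 with hX
  have hXcard : X.card = a + b := by
    rw [hX, Finset.card_union_of_disjoint (hABd i0), hA, hB]
  -- reachability
  have hreach : ∀ (k : ℕ) (i : Fin m) (S : Finset γ), S ⊆ A i ∪ B i →
      S.card = a → ((A i) \ S).card = k →
      ∃ j, A j = S ∧ A j ∪ B j = A i ∪ B i := by
    intro k
    induction k with
    | zero =>
      intro i S hsub hcard h0
      have : A i ⊆ S := by
        intro z hz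
        by_contra hzs
        have : z ∈ A i \ S := Finset.mem_sdiff.2 ⟨hz, hzs⟩
        rw [Finset.card_eq_zero.1 h0] at this
        exact absurd this (Finset.notMem_empty z)
      have hAS : A i = S := Finset.eq_of_subset_of_card_le this
        (by rw [hcard, hA i])
      exact ⟨i, hAS, rfl⟩
    | succ k ih =>
      intro i S hsub hcard hk
      have hxne : (A i \ S).Nonempty := by
        rw [← Finset.card_pos, hk]; omega
      obtain ⟨x, hxmem⟩ := hxne
      rw [Finset.mem_sdiff] at hxmem
      have hyne : (S \ A i).Nonempty := by
        rw [← Finset.card_pos, Finset.card_sdiff_comm (by rw [hcard, hA i]), hk]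
        omega
      obtain ⟨y, hymem⟩ := hyne
      rw [Finset.mem_sdiff] at hymem
      have hyB : y ∈ B i := by
        rcases Finset.mem_union.1 (hsub hymem.1) with h | h
        · exact absurd h hymem.2
        · exact h
      obtain ⟨j, hAj, hBj⟩ := hswap i x y hxmem.1 hyB
      have hunion : A j ∪ B j = A i ∪ B i := by
        rw [hAj, hBj]
        ext z
        simp only [Finset.mem_union, Finset.mem_insert, Finset.mem_erase]
        constructor
        · rintro ((rfl | ⟨-, hz⟩) | (rfl | ⟨-, hz⟩))
          · exact Or.inr hyB
          · exact Or.inl hz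
          · exact Or.inl hxmem.1
          · exact Or.inr hz
        · intro hz
          by_cases hzx : z = x
          · exact Or.inr (Or.inl hzx)
          · by_cases hzy : z = y
            · exact Or.inl (Or.inl hzy)
            · rcases hz with h | h
              · exact Or.inl (Or.inr ⟨hzx, h⟩)
              · exact Or.inr (Or.inr ⟨hzy, h⟩)
      have hAjS : (A j \ S).card = k := by
        rw [hAj, Finset.insert_sdiff_of_mem _ hymem.1]
        have : (A i).erase x \ S = (A i \ S).erase x := by
          ext z
          simp only [Finset.mem_sdiff, Finset.mem_erase]
          tauto
        rw [this, Finset.card_erase_of_mem (Finset.mem_sdiff.2 hxmem), hk]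
        omega
      obtain ⟨j', hj'1, hj'2⟩ := ih j S (by rw [hunion]; exact hsub) hcard hAjS
      exact ⟨j', hj'1, by rw [hj'2, hunion]⟩
  -- assemble
  have hsurj : ∀ S ∈ X.powersetCard a, ∃ j, A j = S ∧ A j ∪ B j = X := by
    intro S hS
    rw [Finset.mem_powersetCard] at hS
    exact hreach ((A i0 \ S).card) i0 S hS.1 hS.2 rfl
  have hpc_card : (X.powersetCard a).card = m := by
    rw [Finset.card_powersetCard, hXcard, hm]
  have himg : X.powersetCard a = Finset.univ.image A := by
    apply Finset.eq_of_subset_of_card_le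
    · intro S hS
      obtain ⟨j, hj, -⟩ := hsurj S hS
      exact Finset.mem_image.2 ⟨j, Finset.mem_univ j, hj⟩
    · rw [hpc_card]
      exact le_trans Finset.card_image_le (by rw [Finset.card_univ, Fintype.card_fin])
  refine ⟨X, hXcard, ?_, ?_⟩
  · rw [himg, Finset.coe_image, Finset.coe_univ, Set.image_univ]
  · intro i
    have hAipc : A i ∈ X.powersetCard a := by
      rw [himg]
      exact Finset.mem_image.2 ⟨i, Finset.mem_univ i, rfl⟩
    obtain ⟨j, hj1, hj2⟩ := hsurj (A i) hAipc
    have hji : j = i := hAinj hj1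
    subst hji
    rw [← hj2, Finset.union_sdiff_cancel_left (hABd j)]
lemma map_sdiff_emb {α β : Type*} [DecidableEq α] [DecidableEq β] (s t : Finset α) (f : α ↪ β) :
    (s \ t).map f = s.map f \ t.map f := by
  ext z
  simp only [Finset.mem_map, Finset.mem_sdiff]
  constructor
  · rintro ⟨w, ⟨hw1, hw2⟩, rfl⟩
    exact ⟨⟨w, hw1, rfl⟩, fun ⟨v, hv, hvw⟩ => hw2 (f.injective hvw ▸ hv)⟩
  · rintro ⟨⟨w, hw, rfl⟩, h2⟩
    exact ⟨w, ⟨hw, fun hwt => h2 ⟨w, hwt, rfl⟩⟩, rfl⟩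

/-- Equality case of Bollobás's theorem on cross-intersecting set-pair systems. -/
theorem bollobas_set_pairs_equality {α : Type*} [DecidableEq α] (m a b : ℕ)
    (A B : Fin m → Finset α)
    (hA : ∀ i, (A i).card = a) (hB : ∀ i, (B i).card = b)
    (hdisj : ∀ i, A i ∩ B i = ∅)
    (hcross : ∀ i j, i ≠ j → (A i ∩ B j).Nonempty) :
    m = (a + b).choose a ↔
      ∃ X : Finset α, X.card = a + b ∧
        Set.range A = ↑(X.powersetCard a) ∧ ∀ i, B i = X \ A i := by
  classical
  constructor
  · intro hm
    set U : Finset α := Finset.univ.biUnion (fun i : Fin m => A i ∪ B i) with hU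
    have hsubA : ∀ i, A i ⊆ U := fun i x hx =>
      Finset.mem_biUnion.2 ⟨i, Finset.mem_univ i, Finset.mem_union_left _ hx⟩
    have hsubB : ∀ i, B i ⊆ U := fun i x hx =>
      Finset.mem_biUnion.2 ⟨i, Finset.mem_univ i, Finset.mem_union_right _ hx⟩
    set A' : Fin m → Finset {x // x ∈ U} := fun i => (A i).subtype (· ∈ U) with hA'def
    set B' : Fin m → Finset {x // x ∈ U} := fun i => (B i).subtype (· ∈ U) with hB'def
    have hmapA : ∀ i, (A' i).map (Function.Embedding.subtype _) = A i := by
      intro i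
      rw [hA'def, Finset.subtype_map, Finset.filter_true_of_mem (fun x hx => hsubA i hx)]
    have hmapB : ∀ i, (B' i).map (Function.Embedding.subtype _) = B i := by
      intro i
      rw [hB'def, Finset.subtype_map, Finset.filter_true_of_mem (fun x hx => hsubB i hx)]
    have hA' : ∀ i, (A' i).card = a := by
      intro i
      rw [← hA i, ← hmapA i, Finset.card_map]
    have hB' : ∀ i, (B' i).card = b := by
      intro i
      rw [← hB i, ← hmapB i, Finset.card_map]
    have hdisj' : ∀ i, A' i ∩ B' i = ∅ := by
      intro i
      rw [Finset.eq_empty_iff_forall_notMem]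
      intro z hz
      rw [Finset.mem_inter, hA'def, hB'def, Finset.mem_subtype, Finset.mem_subtype] at hz
      have : (z : α) ∈ A i ∩ B i := Finset.mem_inter.2 hz
      rw [hdisj i] at this
      exact absurd this (Finset.notMem_empty _)
    have hcross' : ∀ i j, i ≠ j → (A' i ∩ B' j).Nonempty := by
      intro i j hij
      obtain ⟨t, ht⟩ := hcross i j hij
      rw [Finset.mem_inter] at ht
      refine ⟨⟨t, hsubA i ht.1⟩, ?_⟩
      rw [Finset.mem_inter, hA'def, hB'def, Finset.mem_subtype, Finset.mem_subtype]
      exact ht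
    obtain ⟨X', hX'card, hrange', hB'X⟩ :=
      bollobas_aux m a b A' B' hA' hB' hdisj' hcross' hm
    refine ⟨X'.map (Function.Embedding.subtype _),
      by rw [Finset.card_map, hX'card], ?_, ?_⟩
    · rw [Finset.powersetCard_map]
      ext T
      constructor
      · rintro ⟨i, rfl⟩
        have hmem : A' i ∈ X'.powersetCard a := by
          have : A' i ∈ Set.range A' := Set.mem_range_self i
          rw [hrange'] at this
          exact this
        exact Finset.mem_coe.2 (Finset.mem_map.2 ⟨A' i, hmem, hmapA i⟩)
      · intro hT
        obtain ⟨S, hS, hST⟩ := Finset.mem_map.1 (Finset.mem_coe.1 hT)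
        have : S ∈ Set.range A' := by
          rw [hrange']
          exact hS
        obtain ⟨i, rfl⟩ := this
        exact ⟨i, by rw [← hST]; exact (hmapA i).symm⟩
    · intro i
      rw [← hmapB i, hB'X i, map_sdiff_emb, hmapA]
  · rintro ⟨X, hXcard, hrange, hBX⟩
    have hnotmem : ∀ i {z}, z ∈ B i → z ∉ A i := by
      intro i z hzB hzA
      have h2 : z ∈ A i ∩ B i := Finset.mem_inter.2 ⟨hzA, hzB⟩
      rw [hdisj i] at h2
      exact absurd h2 (Finset.notMem_empty z)
    have hAinj : Function.Injective A := by
      intro i j h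
      by_contra hne
      obtain ⟨t, ht⟩ := hcross i j hne
      rw [Finset.mem_inter, h] at ht
      exact hnotmem j ht.2 ht.1
    have hcoe : ↑(Finset.univ.image A) = (↑(X.powersetCard a) : Set (Finset α)) := by
      rw [Finset.coe_image, Finset.coe_univ, Set.image_univ, hrange]
    have himg : Finset.univ.image A = X.powersetCard a := Finset.coe_injective hcoe
    calc m = (Finset.univ : Finset (Fin m)).card := by
          rw [Finset.card_univ, Fintype.card_fin]
      _ = (Finset.univ.image A).card :=
          (Finset.card_image_of_injective _ hAinj).symm
      _ = (X.powersetCard a).card := by rw [himg]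
      _ = (a + b).choose a := by rw [Finset.card_powersetCard, hXcard]
end

section
/- Let {(A_i,B_i)}_{i=1}^m be a collection of pairs of finite sets with |A_i| = a and |B_i| = b for every 1 ≤ i ≤ m, where a ≤ b. Suppose that A_i ∩ A_j ≠ ∅ for all 1 ≤ i, j ≤ m; A_i ∩ B_i = ∅ for all 1 ≤ i ≤ m; and A_i ∩ B_j ≠ ∅ for all 1 ≤ i < j ≤ m. Then m ≤ C(a+b-1, a-1). -/
/-!
Put the ground elements on the moment curve in `ℚ^(a+b)`, so that any `a + b` of them form a
basis, and send a set to the wedge product of its vectors. The resulting `xᵢ = ⋀Aᵢ ∈ ⋀ᵃ` and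
`yⱼ = ⋀Bⱼ ∈ ⋀ᵇ` satisfy `xᵢ ∧ xⱼ = 0`, `xᵢ ∧ yⱼ = 0` for `i < j` and `xᵢ ∧ yᵢ ≠ 0`, so the `xᵢ`
are independent and span a space `W` with `W ∧ W = 0`.

Gaussian elimination with respect to the colex order gives a family `L` of at least `m`
distinct leading `a`-sets of elements of `W`. For every `b`-set `U` in the `(b - a)`-fold upper
shadow of `L`, pick `w ∈ W` whose leading set `S` lies in `U`: then `w ∧ e_(U \ S)` is
annihilated by every `xᵢ` and its colex-largest coordinate among `b`-sets is at `U`. Together with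
the `yⱼ` this is a triangular, hence independent, family in `⋀ᵇ`, so
`m + |∂⁺^(b-a) L| ≤ C(a+b, b)`. If `m > C(a+b-1, b)`, the Lovász form of Kruskal–Katona gives
`|∂⁺^(b-a) L| ≥ C(a+b-1, a)`, contradicting Pascal's rule.
-/

open ExteriorAlgebra Finset Function

namespace HemiBundledBollobas

section Triangular

variable {K V ι κ : Type*} [Field K] [AddCommGroup V] [Module K V]

theorem linearIndependent_of_triangular [Fintype ι] [LinearOrder κ] {v : ι → V}
    (φ : ι → Module.Dual K V) (r : ι → κ) (hr : Injective r)
    (hdiag : ∀ i, φ i (v i) ≠ 0) (htri : ∀ i j, r i < r j → φ i (v j) = 0) :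
    LinearIndependent K v := by
  classical
  rw [Fintype.linearIndependent_iff]
  intro g hg
  by_contra! hne
  obtain ⟨i, hi, hmin⟩ :=
    exists_min_image {j | g j ≠ 0} r (by simpa [Finset.Nonempty] using hne)
  have hφ : ∑ j, g j * φ i (v j) = 0 := by simpa using congrArg (φ i) hg
  rw [sum_eq_single i] at hφ
  · exact (mul_ne_zero (by simpa using hi) (hdiag i)) hφ
  · intro j _ hji
    by_cases hj : g j = 0
    · rw [hj, zero_mul]
    · rw [htri i j ((hmin j (by simpa using hj)).lt_of_ne (hr.ne hji.symm)), mul_zero]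
  · simp

end Triangular

section Wedge

variable (R : Type*) {M α : Type*} [CommRing R] [AddCommGroup M] [Module R M]

/-- The enumeration of `A` is arbitrary; it only affects the sign. -/
noncomputable def wedge (v : α → M) (A : Finset α) : ExteriorAlgebra R M :=
  ιMulti R #A fun i => v (A.equivFin.symm i)

variable {R}

theorem wedge_mem_exteriorPower (v : α → M) (A : Finset α) : wedge R v A ∈ ⋀[R]^#A M :=
  ιMulti_range R _ ⟨_, rfl⟩

theorem wedge_mul_wedge (v : α → M) (A B : Finset α) :
    wedge R v A * wedge R v B = ιMulti R (#A + #B)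
      (Fin.append (fun i => v (A.equivFin.symm i)) fun i => v (B.equivFin.symm i)) :=
  ιMulti_mul_ιMulti _ _

theorem wedge_mul_wedge_of_not_disjoint {v : α → M} {A B : Finset α} (h : ¬ Disjoint A B) :
    wedge R v A * wedge R v B = 0 := by
  obtain ⟨x, hxA, hxB⟩ := not_disjoint_iff.1 h
  rw [wedge_mul_wedge]
  refine ιMulti_eq_zero_of_not_inj fun hinj => ?_
  have := @hinj (Fin.castAdd _ (A.equivFin ⟨x, hxA⟩)) (Fin.natAdd _ (B.equivFin ⟨x, hxB⟩))
    (by simp)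
  have := congrArg Fin.val this
  simp only [Fin.val_castAdd, Fin.val_natAdd] at this
  omega

end Wedge

section Coordinates

variable (K : Type*) [Field K] (n : ℕ)

noncomputable def topForm : ExteriorAlgebra K (Fin n → K) →ₗ[K] K :=
  liftAlternating fun k =>
    if h : k = n then (Pi.basisFun K (Fin n)).det.domDomCongr (finCongr h.symm) else 0

variable {K n}

theorem topForm_ιMulti {k : ℕ} (h : k = n) (v : Fin k → Fin n → K) :
    topForm K n (ιMulti K k v) = Matrix.det fun i => v (Fin.cast h.symm i) := by
  subst h
  simp only [topForm, liftAlternating_apply_ιMulti, Pi.basisFun_det, dite_true, finCongr_refl,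
    AlternatingMap.domDomCongr_refl, Fin.cast_eq_self]
  rfl

theorem topForm_ιMulti_of_ne {k : ℕ} (h : k ≠ n) (v : Fin k → Fin n → K) :
    topForm K n (ιMulti K k v) = 0 := by
  simp [topForm, liftAlternating_apply_ιMulti, h]

noncomputable def monomial (S : Finset (Fin n)) : ExteriorAlgebra K (Fin n → K) :=
  ιMulti_family K #S (Pi.basisFun K (Fin n)) ⟨S, rfl⟩

theorem ιMulti_family_basisFun {k : ℕ} (s : Set.powersetCard (Fin n) k) :
    ιMulti_family K k (Pi.basisFun K (Fin n)) s = monomial s.1 := by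
  obtain ⟨S, rfl⟩ := s
  rfl

theorem monomial_mem_exteriorPower (S : Finset (Fin n)) :
    monomial S ∈ ⋀[K]^#S (Fin n → K) :=
  ιMulti_range K _ ⟨_, rfl⟩

theorem monomial_mul_monomial_of_not_disjoint {S T : Finset (Fin n)} (h : ¬ Disjoint S T) :
    monomial (K := K) S * monomial T = 0 :=
  ιMulti_family_mul_of_not_disjoint K _ ⟨S, rfl⟩ ⟨T, rfl⟩ h

theorem monomial_mul_monomial_of_disjoint {S T : Finset (Fin n)} (h : Disjoint S T) :
    ∃ ε : ℤˣ, monomial (K := K) S * monomial T = ε • monomial (S ∪ T) := by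
  refine ⟨Equiv.Perm.sign (Set.powersetCard.permOfDisjoint (s := ⟨S, rfl⟩) (t := ⟨T, rfl⟩) h),
    (ιMulti_family_mul_of_disjoint K _ ⟨S, rfl⟩ ⟨T, rfl⟩ h).trans ?_⟩
  rw [ιMulti_family_basisFun]
  simp [Set.powersetCard.coe_disjUnion, disjUnion_eq_union]

theorem topForm_monomial_univ : topForm K n (monomial univ) = 1 := by
  have h : #(univ : Finset (Fin n)) = n := by simp
  have hsort : ⇑(Set.powersetCard.ofFinEmbEquiv.symm
      (⟨univ, rfl⟩ : Set.powersetCard (Fin n) #univ)) = Fin.cast h :=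
    (orderEmbOfFin_unique rfl (fun _ => mem_univ _) (Fin.cast_strictMono h)).symm
  rw [monomial, ιMulti_family, topForm_ιMulti h, ← Matrix.det_one (R := K) (n := Fin n)]
  congr 1
  ext i j
  simp only [Function.comp_apply, Pi.basisFun_apply]
  rw [hsort]
  simp only [Matrix.one_apply, Pi.single_apply, Fin.ext_iff]
  exact if_congr eq_comm rfl rfl

theorem topForm_monomial_of_ne_univ {S : Finset (Fin n)} (h : S ≠ univ) :
    topForm K n (monomial S) = 0 :=
  topForm_ιMulti_of_ne (by simpa using ((card_lt_iff_ne_univ _).2 h).ne) _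

variable (n) in
/-- Multiplying by the complementary monomial kills every other monomial, so `coord n S x` is
`x`'s coefficient of `monomial S` up to a nonzero factor. -/
noncomputable def coord (S : Finset (Fin n)) : ExteriorAlgebra K (Fin n → K) →ₗ[K] K :=
  topForm K n ∘ₗ LinearMap.mulRight K (monomial Sᶜ)

theorem coord_apply (S : Finset (Fin n)) (x : ExteriorAlgebra K (Fin n → K)) :
    coord n S x = topForm K n (x * monomial Sᶜ) :=
  rfl

theorem coord_monomial_self_ne_zero (S : Finset (Fin n)) :
    coord n S (monomial (K := K) S) ≠ 0 := by
  obtain ⟨ε, h⟩ := monomial_mul_monomial_of_disjoint (K := K) (disjoint_compl_right (a := S))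
  rw [coord_apply, h, union_compl, LinearMap.map_smul_of_tower, topForm_monomial_univ]
  exact (smul_eq_zero_iff_eq ε).not.2 one_ne_zero

theorem coord_monomial_of_ne {S S' : Finset (Fin n)} (h : S' ≠ S) :
    coord n S (monomial (K := K) S') = 0 := by
  by_cases hd : Disjoint S' Sᶜ
  · obtain ⟨ε, hε⟩ := monomial_mul_monomial_of_disjoint (K := K) hd
    have hne : S' ∪ Sᶜ ≠ univ := fun hu =>
      h (by simpa using (IsCompl.of_eq (disjoint_iff.1 hd) hu).eq_compl)
    rw [coord_apply, hε, LinearMap.map_smul_of_tower, topForm_monomial_of_ne_univ hne, smul_zero]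
  · rw [coord_apply, monomial_mul_monomial_of_not_disjoint hd, map_zero]

theorem coord_mul_monomial_of_not_subset {S T : Finset (Fin n)} (h : ¬ T ⊆ S)
    (x : ExteriorAlgebra K (Fin n → K)) : coord n S (x * monomial T) = 0 := by
  rw [coord_apply, mul_assoc, monomial_mul_monomial_of_not_disjoint, mul_zero, map_zero]
  rwa [disjoint_compl_right_iff]

theorem apply_eq_mul_repr {k : ℕ} (f : ExteriorAlgebra K (Fin n → K) →ₗ[K] K)
    (s : Set.powersetCard (Fin n) k)
    (hf : ∀ t : Set.powersetCard (Fin n) k, t ≠ s → f (monomial t.1) = 0)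
    (x : ⋀[K]^k (Fin n → K)) :
    f x = f (monomial s.1) * ((Pi.basisFun K (Fin n)).exteriorPower k).repr x s := by
  have := ((Pi.basisFun K (Fin n)).exteriorPower k).ext
    (f₁ := f ∘ₗ (⋀[K]^k (Fin n → K)).subtype)
    (f₂ := f (monomial s.1) • ((Pi.basisFun K (Fin n)).exteriorPower k).coord s) fun t => by
      by_cases ht : t = s
      · subst ht
        simp [ιMulti_family_basisFun]
      · simp [ιMulti_family_basisFun, hf t ht,
          exteriorPower.basis_repr_ne K k (Pi.basisFun K (Fin n)) ht]
  simpa using LinearMap.congr_fun this x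

theorem coord_eq_zero_of_card_ne {k : ℕ} {x : ExteriorAlgebra K (Fin n → K)}
    (hx : x ∈ ⋀[K]^k (Fin n → K)) {S : Finset (Fin n)} (hS : #S ≠ k) : coord n S x = 0 := by
  have := ((Pi.basisFun K (Fin n)).exteriorPower k).ext
    (f₁ := coord n S ∘ₗ (⋀[K]^k (Fin n → K)).subtype) (f₂ := 0) fun t => by
      simpa [ιMulti_family_basisFun] using
        coord_monomial_of_ne (K := K) fun h => hS (by rw [← h]; exact t.2)
  exact LinearMap.congr_fun this ⟨x, hx⟩

theorem eq_zero_of_forall_coord_eq_zero {k : ℕ} {x : ExteriorAlgebra K (Fin n → K)}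
    (hx : x ∈ ⋀[K]^k (Fin n → K)) (h : ∀ S, coord n S x = 0) : x = 0 := by
  lift x to ⋀[K]^k (Fin n → K) using hx
  have hrepr : ((Pi.basisFun K (Fin n)).exteriorPower k).repr x = 0 := Finsupp.ext fun s => by
    have := apply_eq_mul_repr (coord n s.1) s
      (fun t ht => coord_monomial_of_ne (Subtype.coe_injective.ne ht)) x
    rw [h] at this
    exact (mul_eq_zero.1 this.symm).resolve_left (coord_monomial_self_ne_zero _)
  simpa using hrepr

theorem coord_mul_monomial_of_subset {k : ℕ} {x : ExteriorAlgebra K (Fin n → K)}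
    (hx : x ∈ ⋀[K]^k (Fin n → K)) {S T : Finset (Fin n)} (hTS : T ⊆ S) (hcard : #S = k + #T) :
    ∃ ε : K, ε ≠ 0 ∧ coord n S (x * monomial T) = ε * coord n (S \ T) x := by
  lift x to ⋀[K]^k (Fin n → K) using hx
  let s : Set.powersetCard (Fin n) k :=
    ⟨S \ T, by rw [Set.powersetCard.mem_iff, card_sdiff_of_subset hTS]; omega⟩
  have hf : ∀ t ≠ s, coord n S (monomial t.1 * monomial (K := K) T) = 0 := by
    intro t ht
    by_cases hd : Disjoint t.1 T
    · obtain ⟨ε, hε⟩ := monomial_mul_monomial_of_disjoint (K := K) hd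
      rw [hε, LinearMap.map_smul_of_tower, coord_monomial_of_ne, smul_zero]
      rintro rfl
      exact ht (Subtype.ext (union_sdiff_cancel_right hd).symm)
    · rw [monomial_mul_monomial_of_not_disjoint hd, map_zero]
  have h₁ := apply_eq_mul_repr (coord n S ∘ₗ LinearMap.mulRight K (monomial T)) s hf x
  have h₂ : coord n (S \ T) x = coord n (S \ T) (monomial (S \ T)) *
      ((Pi.basisFun K (Fin n)).exteriorPower k).repr x s :=
    apply_eq_mul_repr (coord n (S \ T)) s
      (fun t ht => coord_monomial_of_ne (Subtype.coe_injective.ne ht)) x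
  obtain ⟨ε, hε⟩ :=
    monomial_mul_monomial_of_disjoint (K := K) (sdiff_disjoint : Disjoint (S \ T) T)
  have hne : coord n S (monomial s.1 * monomial (K := K) T) ≠ 0 := by
    rw [hε, sdiff_union_of_subset hTS, LinearMap.map_smul_of_tower]
    exact (smul_eq_zero_iff_eq ε).not.2 (coord_monomial_self_ne_zero S)
  refine ⟨coord n S (monomial s.1 * monomial T) / coord n (S \ T) (monomial (S \ T)),
    div_ne_zero hne (coord_monomial_self_ne_zero _), ?_⟩
  simp only [LinearMap.comp_apply, LinearMap.mulRight_apply] at h₁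
  rw [h₁, h₂]
  field_simp [coord_monomial_self_ne_zero (K := K) (S \ T)]

end Coordinates

section LeadingSets

open Finset.Colex

variable {K : Type*} [Field K] {n : ℕ}

def IsLeadingSet (x : ExteriorAlgebra K (Fin n → K)) (S : Finset (Fin n)) : Prop :=
  coord n S x ≠ 0 ∧ ∀ S', coord n S' x ≠ 0 → toColex S' ≤ toColex S

theorem exists_isLeadingSet {k : ℕ} {x : ExteriorAlgebra K (Fin n → K)}
    (hx : x ∈ ⋀[K]^k (Fin n → K)) (hx₀ : x ≠ 0) : ∃ S, IsLeadingSet x S := by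
  classical
  have hne : ({S | coord n S x ≠ 0} : Finset (Finset (Fin n))).Nonempty := by
    contrapose! hx₀
    rw [filter_eq_empty_iff] at hx₀
    exact eq_zero_of_forall_coord_eq_zero hx fun S => by simpa using hx₀ (mem_univ S)
  obtain ⟨S, hS, hmax⟩ := exists_max_image _ toColex hne
  exact ⟨S, by simpa using hS, fun S' h => hmax S' (by simpa using h)⟩

theorem IsLeadingSet.card_eq {k : ℕ} {x : ExteriorAlgebra K (Fin n → K)}
    (hx : x ∈ ⋀[K]^k (Fin n → K)) {S : Finset (Fin n)} (h : IsLeadingSet x S) : #S = k := by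
  by_contra hS
  exact h.1 (coord_eq_zero_of_card_ne hx hS)

open Classical in
noncomputable def leadingSets (W : Submodule K (ExteriorAlgebra K (Fin n → K))) :
    Finset (Finset (Fin n)) :=
  {S | ∃ x ∈ W, IsLeadingSet x S}

theorem finrank_le_card_leadingSets {k : ℕ} {W : Submodule K (ExteriorAlgebra K (Fin n → K))}
    (hW : W ≤ ⋀[K]^k (Fin n → K)) : Module.finrank K W ≤ #(leadingSets W) := by
  let φ : W →ₗ[K] leadingSets W → K := LinearMap.pi fun S => coord n S.1 ∘ₗ W.subtype
  have hφ : Injective φ := by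
    rw [← LinearMap.ker_eq_bot, eq_bot_iff]
    intro x hx
    by_contra hx₀
    obtain ⟨S, hS⟩ := exists_isLeadingSet (hW x.2) (by simpa using hx₀)
    have hSL : S ∈ leadingSets W := by simpa [leadingSets] using ⟨x, x.2, hS⟩
    exact hS.1 (congrFun (LinearMap.mem_ker.1 hx) ⟨S, hSL⟩)
  simpa using LinearMap.finrank_le_finrank_of_injective hφ

theorem coord_mul_monomial_sdiff_ne_zero {k : ℕ} {x : ExteriorAlgebra K (Fin n → K)}
    (hx : x ∈ ⋀[K]^k (Fin n → K)) {S U : Finset (Fin n)} (hS : IsLeadingSet x S) (hSU : S ⊆ U) :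
    coord n U (x * monomial (U \ S)) ≠ 0 := by
  obtain ⟨ε, hε, h⟩ := coord_mul_monomial_of_subset hx (sdiff_subset : U \ S ⊆ U)
    (by rw [← hS.card_eq hx, card_sdiff_of_subset hSU]; have := card_le_card hSU; omega)
  rw [h, Finset.sdiff_sdiff_eq_self hSU]
  exact mul_ne_zero hε hS.1

theorem coord_mul_monomial_sdiff_eq_zero {k : ℕ} {x : ExteriorAlgebra K (Fin n → K)}
    (hx : x ∈ ⋀[K]^k (Fin n → K)) {S U U' : Finset (Fin n)} (hS : IsLeadingSet x S)
    (hSU' : S ⊆ U') (hcard : #U = #U') (hlt : toColex U' < toColex U) :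
    coord n U (x * monomial (U' \ S)) = 0 := by
  by_cases hT : U' \ S ⊆ U
  · obtain ⟨ε, -, h⟩ := coord_mul_monomial_of_subset hx hT
      (by rw [hcard, ← hS.card_eq hx, card_sdiff_of_subset hSU']; have := card_le_card hSU'; omega)
    rw [h, mul_eq_zero]
    refine .inr (by_contra fun hne => ?_)
    have := (toColex_sdiff_lt_toColex_sdiff sdiff_subset hT).2 hlt
    rw [Finset.sdiff_sdiff_eq_self hSU'] at this
    exact (hS.2 _ hne).not_gt this
  · exact coord_mul_monomial_of_not_subset hT x

end LeadingSets

section KruskalKatona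

open scoped FinsetFamily

theorem choose_le_card_upShadow_iterate {n r i k : ℕ} {𝒜 : Finset (Finset (Fin n))}
    (h𝒜 : (𝒜 : Set (Finset (Fin n))).Sized r) (hi : i ≤ n - r) (hk : n - r ≤ k) (hkn : k ≤ n)
    (hcard : k.choose (n - r) ≤ #𝒜) : k.choose (n - r - i) ≤ #(∂⁺^[i] 𝒜) := by
  have hcompl : (∂⁺^[i] 𝒜)ᶜˢ = ∂^[i] 𝒜ᶜˢ :=
    (Semiconj.iterate_right (f := compls) (fun _ => shadow_compls.symm) i) 𝒜
  rw [← card_compls, hcompl]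
  exact kruskal_katona_lovasz_form hi hk hkn (by simpa using h𝒜.compls) (by rwa [card_compls])

end KruskalKatona

section Bollobas

open Finset.Colex
open scoped FinsetFamily

variable {K : Type*} [Field K] {n : ℕ}

theorem card_add_card_upShadow_leadingSets_le {a b m : ℕ} (hab : a ≤ b)
    {W : Submodule K (ExteriorAlgebra K (Fin n → K))} (hW : W ≤ ⋀[K]^a (Fin n → K))
    (x y : Fin m → ExteriorAlgebra K (Fin n → K)) (hy : ∀ j, y j ∈ ⋀[K]^b (Fin n → K))
    (hxW : ∀ i, ∀ w ∈ W, x i * w = 0) (hxy : ∀ i j, i < j → x i * y j = 0)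
    (hdiag : ∀ i, topForm K n (x i * y i) ≠ 0) :
    m + #(∂⁺^[b - a] (leadingSets W)) ≤ n.choose b := by
  classical
  set 𝒰 := ∂⁺^[b - a] (leadingSets W)
  have h𝒰 : ∀ U : 𝒰, ∃ S w, w ∈ W ∧ IsLeadingSet w S ∧ S ⊆ U.1 ∧ #U.1 = b := by
    rintro ⟨U, hU⟩
    obtain ⟨S, hS, hSU, hcard⟩ := mem_upShadow_iterate_iff_exists_sdiff.1 hU
    obtain ⟨w, hw, hwS⟩ : ∃ w ∈ W, IsLeadingSet w S := by simpa [leadingSets] using hS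
    refine ⟨S, w, hw, hwS, hSU, show #U = b from ?_⟩
    have := hwS.card_eq (hW hw)
    have := card_sdiff_add_card_eq_card hSU
    omega
  choose S w hwW hwS hSU hcard using h𝒰
  let v : Fin m ⊕ 𝒰 → ExteriorAlgebra K (Fin n → K) :=
    Sum.elim y fun U => w U * monomial (U.1 \ S U)
  let φ : Fin m ⊕ 𝒰 → Module.Dual K (ExteriorAlgebra K (Fin n → K)) :=
    Sum.elim (fun i => topForm K n ∘ₗ LinearMap.mulLeft K (x i)) fun U => coord n U.1
  -- the `y j` come first, in index order, then the `w U * monomial _` in decreasing colex order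
  let r : Fin m ⊕ 𝒰 → Fin m ⊕ₗ (Colex (Finset (Fin n)))ᵒᵈ :=
    fun p => toLex (p.map id fun U => OrderDual.toDual (toColex U.1))
  have hr : Injective r := by
    refine toLex.injective.comp (Sum.map_injective.2 ⟨injective_id, fun U U' h => ?_⟩)
    exact Subtype.ext (toColex_inj.1 (OrderDual.toDual.injective h))
  have hind : LinearIndependent K v := by
    refine linearIndependent_of_triangular φ r hr ?_ ?_
    · rintro (i | U)
      · exact hdiag i
      · exact coord_mul_monomial_sdiff_ne_zero (hW (hwW U)) (hwS U) (hSU U)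
    · rintro (i | U) (j | U') hlt
      · show topForm K n (x i * y j) = 0
        rw [hxy i j (Sum.Lex.inl_lt_inl_iff.1 hlt), map_zero]
      · show topForm K n (x i * (w U' * _)) = 0
        rw [← mul_assoc, hxW i _ (hwW U'), zero_mul, map_zero]
      · exact absurd hlt Sum.Lex.not_inr_lt_inl
      · exact coord_mul_monomial_sdiff_eq_zero (hW (hwW U')) (hwS U') (hSU U')
          ((hcard U).trans (hcard U').symm)
          (OrderDual.toDual_lt_toDual.1 (Sum.Lex.inr_lt_inr_iff.1 hlt))
  have hv : ∀ p, v p ∈ ⋀[K]^b (Fin n → K) := by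
    rintro (j | U)
    · exact hy j
    · have hmul := SetLike.GradedMul.mul_mem (hW (hwW U))
        (monomial_mem_exteriorPower (K := K) (U.1 \ S U))
      rwa [card_sdiff_of_subset (hSU U), hcard U, (hwS U).card_eq (hW (hwW U)),
        Nat.add_sub_cancel' (by have := card_le_card (hSU U); omega)] at hmul
  calc m + #𝒰 = Fintype.card (Fin m ⊕ 𝒰) := by simp
    _ = Module.finrank K (Submodule.span K (Set.range v)) := (finrank_span_eq_card hind).symm
    _ ≤ Module.finrank K (⋀[K]^b (Fin n → K)) :=
      Submodule.finrank_mono (Submodule.span_le.2 (Set.range_subset_iff.2 hv))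
    _ = n.choose b := by simp [exteriorPower.finrank_eq]

theorem card_le_choose_of_exteriorAlgebra {a b m : ℕ} (ha : 0 < a) (hab : a ≤ b)
    (x y : Fin m → ExteriorAlgebra K (Fin (a + b) → K))
    (hx : ∀ i, x i ∈ ⋀[K]^a (Fin (a + b) → K)) (hy : ∀ j, y j ∈ ⋀[K]^b (Fin (a + b) → K))
    (hxx : ∀ i j, x i * x j = 0) (hxy : ∀ i j, i < j → x i * y j = 0)
    (hdiag : ∀ i, topForm K (a + b) (x i * y i) ≠ 0) :
    m ≤ (a + b - 1).choose (a - 1) := by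
  set W := Submodule.span K (Set.range x)
  have hW : W ≤ ⋀[K]^a (Fin (a + b) → K) := Submodule.span_le.2 (Set.range_subset_iff.2 hx)
  have hxW : ∀ i, ∀ w ∈ W, x i * w = 0 := fun i w hw =>
    Submodule.span_le (p := LinearMap.ker (LinearMap.mulLeft K (x i))).2
      (Set.range_subset_iff.2 fun j => hxx i j) hw
  have hindep : LinearIndependent K x :=
    linearIndependent_of_triangular (fun i => topForm K _ ∘ₗ LinearMap.mulRight K (y i))
      OrderDual.toDual OrderDual.toDual.injective hdiag fun i j hji => by
        show topForm K _ (x j * y i) = 0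
        rw [hxy j i hji, map_zero]
  have hm : m ≤ #(leadingSets W) := by
    simpa [W, finrank_span_eq_card hindep] using finrank_le_card_leadingSets hW
  have hsized : (leadingSets W : Set (Finset (Fin (a + b)))).Sized a := fun S hS => by
    obtain ⟨w, hw, hwS⟩ : ∃ w ∈ W, IsLeadingSet w S := by simpa [leadingSets] using hS
    exact hwS.card_eq (hW hw)
  have hcount := card_add_card_upShadow_leadingSets_le hab hW x y hy hxW hxy hdiag
  have hpascal := Nat.choose_succ_succ' (a + b - 1) (b - 1)
  rw [Nat.sub_add_cancel (by omega), Nat.sub_add_cancel (by omega),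
    Nat.choose_symm_of_eq_add (show a + b - 1 = (b - 1) + a by omega)] at hpascal
  rw [Nat.choose_symm_of_eq_add (show a + b - 1 = (a - 1) + b by omega)]
  by_contra! hlt
  have hKK := choose_le_card_upShadow_iterate hsized (i := b - a) (k := a + b - 1)
    (by omega) (by omega) (by omega) (by rw [Nat.add_sub_cancel_left]; omega)
  rw [show a + b - a - (b - a) = a by omega] at hKK
  omega

end Bollobas

section MomentCurve

variable {K : Type*} [Field K]

def momentVec (n : ℕ) (q : K) : Fin n → K := fun k => q ^ (k : ℕ)

theorem topForm_ιMulti_momentVec_ne_zero {n k : ℕ} (h : k = n) {q : Fin k → K}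
    (hq : Injective q) : topForm K n (ιMulti K k (momentVec n ∘ q)) ≠ 0 := by
  subst h
  rw [topForm_ιMulti rfl]
  exact Matrix.det_vandermonde_ne_zero_iff.2 hq

theorem topForm_wedge_mul_wedge_ne_zero {α : Type*} {n : ℕ} {t : α → K} {A B : Finset α}
    (hAB : Disjoint A B) (ht : Set.InjOn t (↑A ∪ ↑B)) (hn : #A + #B = n) :
    topForm K n (wedge K (momentVec n ∘ t) A * wedge K (momentVec n ∘ t) B) ≠ 0 := by
  set q := Fin.append (fun i => t (A.equivFin.symm i)) fun i => t (B.equivFin.symm i)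
  have hq : Injective q := by
    refine Fin.append_injective_iff.2 ⟨fun i j h => ?_, fun i j h => ?_, fun i j h => ?_⟩
    · exact A.equivFin.symm.injective (Subtype.ext (ht (.inl (A.equivFin.symm i).2)
        (.inl (A.equivFin.symm j).2) h))
    · exact B.equivFin.symm.injective (Subtype.ext (ht (.inr (B.equivFin.symm i).2)
        (.inr (B.equivFin.symm j).2) h))
    · exact disjoint_left.1 hAB (A.equivFin.symm i).2
        (ht (.inl (A.equivFin.symm i).2) (.inr (B.equivFin.symm j).2) h ▸ (B.equivFin.symm j).2)
  have happend : Fin.append (fun i => (momentVec n ∘ t) (A.equivFin.symm i))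
      (fun i => (momentVec n ∘ t) (B.equivFin.symm i)) = momentVec n ∘ q := by
    ext i : 1
    refine Fin.addCases (fun i => ?_) (fun i => ?_) i <;> simp [q]
  rw [wedge_mul_wedge, happend]
  exact topForm_ιMulti_momentVec_ne_zero hn hq

end MomentCurve

end HemiBundledBollobas

open HemiBundledBollobas

/-- The conjecture of Gerbner et al.: the `t = 0` uniform case of the
hemi-bundled Bollobás theorem for sets. -/
theorem gerbner_conjecture {α : Type*} [DecidableEq α] (m a b : ℕ) (hab : a ≤ b)
    (A B : Fin m → Finset α)
    (hA : ∀ i, (A i).card = a) (hB : ∀ i, (B i).card = b)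
    (hAA : ∀ i j, (A i ∩ A j).Nonempty)
    (hABi : ∀ i, A i ∩ B i = ∅)
    (hABj : ∀ i j, i < j → (A i ∩ B j).Nonempty) :
    m ≤ (a + b - 1).choose (a - 1) := by
  rcases Nat.eq_zero_or_pos m with rfl | hm
  · exact Nat.zero_le _
  have ha : 0 < a := hA ⟨0, hm⟩ ▸ card_pos.2 (by simpa using hAA ⟨0, hm⟩ ⟨0, hm⟩)
  set X := univ.biUnion fun i => A i ∪ B i
  let t : α → ℚ := fun x => X.toList.idxOf x
  have ht : Set.InjOn t X := fun x hx y _ h =>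
    (List.idxOf_inj (l := X.toList) (mem_toList.2 hx)).1 (Nat.cast_injective h)
  let v := momentVec (a + b) ∘ t
  have hx i : wedge ℚ v (A i) ∈ ⋀[ℚ]^a (Fin (a + b) → ℚ) := by
    simpa only [hA i] using wedge_mem_exteriorPower (R := ℚ) v (A i)
  have hy j : wedge ℚ v (B j) ∈ ⋀[ℚ]^b (Fin (a + b) → ℚ) := by
    simpa only [hB j] using wedge_mem_exteriorPower (R := ℚ) v (B j)
  refine card_le_choose_of_exteriorAlgebra ha hab (fun i => wedge ℚ v (A i))
    (fun j => wedge ℚ v (B j)) hx hy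
    (fun i j => wedge_mul_wedge_of_not_disjoint (not_disjoint_iff_nonempty_inter.2 (hAA i j)))
    (fun i j hij => wedge_mul_wedge_of_not_disjoint
      (not_disjoint_iff_nonempty_inter.2 (hABj i j hij)))
    fun i => topForm_wedge_mul_wedge_ne_zero (disjoint_iff_inter_eq_empty.2 (hABi i))
      (ht.mono ?_) (by rw [hA, hB])
  rw [← coe_union, coe_subset]
  exact subset_biUnion_of_mem (fun i => A i ∪ B i) (mem_univ i)
end

section
/- Let n, a, b be non-negative integers with a + b ≤ n and 2a ≤ n, and let 𝒜 ⊆ ([n] choose a) be an intersecting hypergraph (i.e. any two members of 𝒜 have nonempty intersection). Then |∂^b 𝒜| / C(n-1, a+b-1) ≥ |𝒜| / C(n-1, a-1), where ∂^b 𝒜 = {B ∈ ([n] choose a+b) : there exists A ∈ 𝒜 with A ⊆ B} is the b-upper shadow of 𝒜. -/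
/-!
Katona's circle method. For a bijection `σ : ZMod n ≃ α`, the `L`-arcs of `σ` are the images of
the cyclic intervals `{s, …, s + L - 1}`. If `k` of the `a`-arcs lie in `𝒜`, they pairwise
intersect, so `k ≤ a` when `2a ≤ n`. The `(a + b)`-arcs starting at `s - u` with `u ≤ b` and `s`
one of these `k` starts lie in the upper shadow; shifting a proper nonempty subset of `ZMod n`
by `-1` always adds a new point, so there are at least `min (k + b) n` of them, and with `k ≤ a`
this gives `(a + b) k ≤ a · #(shadow arcs)`. Summing over `σ`: by symmetry every `L`-set is an
arc equally often, so the number of pairs `(σ, s)` whose `L`-arc lies in an `L`-uniform `ℬ` is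
`#ℬ · L · n! / C(n - 1, L - 1)`.
-/

open Finset

namespace ZMod

variable {n : ℕ}

def cyclicInterval (L : ℕ) (s : ZMod n) : Finset (ZMod n) := (range L).image fun i : ℕ => s + i

lemma mem_cyclicInterval {L : ℕ} {s x : ZMod n} :
    x ∈ cyclicInterval L s ↔ ∃ i < L, s + i = x := by
  simp [cyclicInterval]

lemma natCast_injOn_range : Set.InjOn (Nat.cast : ℕ → ZMod n) (range n) := by
  intro i hi j hj h
  simp only [coe_range, Set.mem_Iio] at hi hj
  rwa [natCast_eq_natCast_iff', Nat.mod_eq_of_lt hi, Nat.mod_eq_of_lt hj] at h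

lemma card_cyclicInterval {L : ℕ} (hL : L ≤ n) (s : ZMod n) : #(cyclicInterval L s) = L := by
  rw [cyclicInterval, card_image_of_injOn, card_range]
  exact fun i hi j hj h => natCast_injOn_range (range_subset_range.2 hL hi)
    (range_subset_range.2 hL hj) (add_left_cancel h)

lemma cyclicInterval_subset {a b u : ℕ} (hu : u ≤ b) (s : ZMod n) :
    cyclicInterval a s ⊆ cyclicInterval (a + b) (s - u) := by
  intro x hx
  obtain ⟨i, hi, rfl⟩ := mem_cyclicInterval.1 hx
  exact mem_cyclicInterval.2 ⟨u + i, by omega, by push_cast; ring⟩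

lemma disjoint_cyclicInterval_add {a : ℕ} (h2a : 2 * a ≤ n) (s : ZMod n) :
    Disjoint (cyclicInterval a s) (cyclicInterval a (s + a)) := by
  refine disjoint_left.2 fun x hx hx' => ?_
  obtain ⟨i, hi, rfl⟩ := mem_cyclicInterval.1 hx
  obtain ⟨j, hj, hij⟩ := mem_cyclicInterval.1 hx'
  have : a + j = i := natCast_injOn_range (mem_range.2 (by omega : a + j < n))
    (mem_range.2 (by omega : i < n)) (by push_cast; linear_combination hij)
  omega

lemma exists_eq_add_or_eq_add_sub_of_inter_nonempty {a : ℕ} {s t : ZMod n}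
    (h : (cyclicInterval a s ∩ cyclicInterval a t).Nonempty) :
    ∃ k < a, t = s + k ∨ t = s + k - a := by
  obtain ⟨x, hx⟩ := h
  obtain ⟨⟨i, hi, rfl⟩, ⟨j, hj, hij⟩⟩ := And.imp mem_cyclicInterval.1 mem_cyclicInterval.1
    (mem_inter.1 hx)
  rcases le_or_gt j i with hji | hij'
  · exact ⟨i - j, by omega, .inl (by push_cast [hji]; linear_combination hij)⟩
  · refine ⟨a + i - j, by omega, .inr ?_⟩
    push_cast [(by omega : j ≤ a + i)]
    linear_combination hij

theorem card_le_of_cyclicInterval_inter_nonempty {a : ℕ} (h2a : 2 * a ≤ n) {S : Finset (ZMod n)}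
    (hS : ∀ s ∈ S, ∀ t ∈ S, (cyclicInterval a s ∩ cyclicInterval a t).Nonempty) : #S ≤ a := by
  obtain rfl | ⟨s₀, hs₀⟩ := S.eq_empty_or_nonempty
  · simp
  have hcover : S ⊆ (range a).biUnion fun k => {s₀ + k, s₀ + k - a} := by
    intro t ht
    obtain ⟨k, hk, hkt⟩ := exists_eq_add_or_eq_add_sub_of_inter_nonempty (hS s₀ hs₀ t ht)
    simpa [hk] using ⟨k, hk, hkt⟩
  have hpair : ∀ x : ZMod n, #(S ∩ {x, x - a}) ≤ 1 := by
    intro x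
    have hdisj : Disjoint (cyclicInterval a (x - (a : ZMod n))) (cyclicInterval a x) := by
      simpa using disjoint_cyclicInterval_add h2a (x - a)
    refine card_le_one.2 fun u hu v hv => ?_
    simp only [mem_inter, mem_insert, mem_singleton] at hu hv
    obtain ⟨hu, rfl | rfl⟩ := hu <;> obtain ⟨hv, rfl | rfl⟩ := hv
    · rfl
    · exact absurd hdisj.symm (not_disjoint_iff_nonempty_inter.2 (hS _ hu _ hv))
    · exact absurd hdisj (not_disjoint_iff_nonempty_inter.2 (hS _ hu _ hv))
    · rfl
  calc #S = #((range a).biUnion fun k => S ∩ {s₀ + k, s₀ + k - a}) := by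
        rw [← inter_biUnion, inter_eq_left.2 hcover]
    _ ≤ ∑ k ∈ range a, #(S ∩ {s₀ + k, s₀ + k - a}) := card_biUnion_le
    _ ≤ #(range a) • 1 := sum_le_card_nsmul _ _ _ fun k _ => hpair _
    _ = a := by simp

def extendLeft (T : Finset (ZMod n)) : Finset (ZMod n) := T ∪ T.image (· - 1)

lemma exists_sub_of_mem_iterate_extendLeft {S : Finset (ZMod n)} {b : ℕ} {t : ZMod n}
    (ht : t ∈ extendLeft^[b] S) : ∃ s ∈ S, ∃ u ≤ b, t = s - u := by
  induction b generalizing t with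
  | zero => exact ⟨t, ht, 0, le_rfl, by simp⟩
  | succ b ih =>
    rw [Function.iterate_succ_apply', extendLeft, mem_union, mem_image] at ht
    obtain ht | ⟨t', ht', rfl⟩ := ht
    · obtain ⟨s, hs, u, hu, rfl⟩ := ih ht
      exact ⟨s, hs, u, by omega, rfl⟩
    · obtain ⟨s, hs, u, hu, rfl⟩ := ih ht'
      exact ⟨s, hs, u + 1, by omega, by push_cast; ring⟩

variable [NeZero n]

lemma eq_univ_of_forall_sub_one_mem {T : Finset (ZMod n)} (hT : T.Nonempty)
    (h : ∀ t ∈ T, t - 1 ∈ T) : T = univ := by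
  obtain ⟨t, ht⟩ := hT
  have hsub : ∀ m : ℕ, t - m ∈ T := by
    intro m
    induction m with
    | zero => simpa using ht
    | succ m ih => simpa [sub_add_eq_sub_sub] using h _ ih
  exact eq_univ_of_forall fun x => by simpa using hsub (t - x).val

lemma min_card_add_one_le_card_extendLeft {T : Finset (ZMod n)} (hT : T.Nonempty) :
    min (#T + 1) n ≤ #(extendLeft T) := by
  obtain hlt | hle := lt_or_ge #T #(extendLeft T)
  · exact (min_le_left _ _).trans hlt
  have hfix : extendLeft T = T := (eq_of_subset_of_card_le subset_union_left hle).symm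
  have huniv : T = univ := eq_univ_of_forall_sub_one_mem hT fun t ht =>
    hfix ▸ subset_union_right (mem_image_of_mem _ ht)
  rw [hfix, huniv, card_univ, ZMod.card]
  exact min_le_right _ _

lemma min_card_add_le_card_iterate_extendLeft {S : Finset (ZMod n)} (hS : S.Nonempty) (b : ℕ) :
    min (#S + b) n ≤ #(extendLeft^[b] S) := by
  induction b with
  | zero => simp
  | succ b ih =>
    have hne : (extendLeft^[b] S).Nonempty := by
      have := hS.card_pos
      have := NeZero.pos n
      exact card_pos.1 (by omega)
    rw [Function.iterate_succ_apply']
    have := min_card_add_one_le_card_extendLeft hne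
    omega

lemma add_mul_card_le_mul_card_of_sub_mem {a b : ℕ} {S S' : Finset (ZMod n)} (hS : #S ≤ a)
    (hab : a + b ≤ n) (hS' : ∀ s ∈ S, ∀ u ≤ b, s - (u : ZMod n) ∈ S') : (a + b) * #S ≤ a * #S' := by
  obtain rfl | hne := S.eq_empty_or_nonempty
  · simp
  have hgrow : min (#S + b) n ≤ #S' := by
    refine (min_card_add_le_card_iterate_extendLeft hne b).trans (card_le_card fun t ht => ?_)
    obtain ⟨s, hs, u, hu, rfl⟩ := exists_sub_of_mem_iterate_extendLeft ht
    exact hS' s hs u hu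
  obtain h | h := le_total (#S + b) n
  · rw [min_eq_left h] at hgrow
    nlinarith
  · rw [min_eq_right h] at hgrow
    nlinarith

end ZMod

section CyclicOrder

open ZMod
open scoped Pointwise Nat

variable {n : ℕ} {α : Type*}

def arc (σ : ZMod n ≃ α) (L : ℕ) (s : ZMod n) : Finset α := (cyclicInterval L s).map σ.toEmbedding

lemma card_arc {L : ℕ} (hL : L ≤ n) (σ : ZMod n ≃ α) (s : ZMod n) : #(arc σ L s) = L := by
  rw [arc, card_map, card_cyclicInterval hL]

variable [NeZero n] [DecidableEq α]

def arcStarts (σ : ZMod n ≃ α) (L : ℕ) (ℬ : Finset (Finset α)) : Finset (ZMod n) :=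
  {s | arc σ L s ∈ ℬ}

@[simp]
lemma mem_arcStarts {σ : ZMod n ≃ α} {L : ℕ} {ℬ : Finset (Finset α)} {s : ZMod n} :
    s ∈ arcStarts σ L ℬ ↔ arc σ L s ∈ ℬ := by
  simp [arcStarts]

lemma add_mul_card_arcStarts_le [Fintype α] {a b : ℕ} (σ : ZMod n ≃ α) (h2a : 2 * a ≤ n)
    (hab : a + b ≤ n) {𝒜 : Finset (Finset α)} (hint : ∀ A ∈ 𝒜, ∀ A' ∈ 𝒜, (A ∩ A').Nonempty) :
    (a + b) * #(arcStarts σ a 𝒜) ≤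
      a * #(arcStarts σ (a + b) {B ∈ univ.powersetCard (a + b) | ∃ A ∈ 𝒜, A ⊆ B}) := by
  refine add_mul_card_le_mul_card_of_sub_mem ?_ hab fun s hs u hu => ?_
  · refine card_le_of_cyclicInterval_inter_nonempty h2a fun s hs t ht => ?_
    have := hint _ (mem_arcStarts.1 hs) _ (mem_arcStarts.1 ht)
    rwa [arc, arc, ← map_inter, map_nonempty] at this
  · exact mem_arcStarts.2 (mem_filter.2 ⟨mem_powersetCard_univ.2 (card_arc hab σ _),
      arc σ a s, mem_arcStarts.1 hs, map_subset_map.2 (cyclicInterval_subset hu s)⟩)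

variable [Fintype α]

variable (n) in
def arcCount (L : ℕ) (B : Finset α) : ℕ := ∑ σ : ZMod n ≃ α, #{s | arc σ L s = B}

lemma arcCount_smul (L : ℕ) (τ : Equiv.Perm α) (B : Finset α) :
    arcCount n L (τ • B) = arcCount n L B := by
  refine (Fintype.sum_equiv ((Equiv.refl (ZMod n)).equivCongr τ) _ _ fun σ => ?_).symm
  have harc : ∀ s, arc ((Equiv.refl (ZMod n)).equivCongr τ σ) L s = τ • arc σ L s := by
    intro s
    rw [arc, arc, smul_finset_def, map_eq_image, map_eq_image, image_image]
    rfl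
  simp only [harc, smul_left_cancel_iff]

lemma arcCount_eq_of_card_eq {L : ℕ} {B B' : Finset α} (hB : #B = L) (hB' : #B' = L) :
    arcCount n L B = arcCount n L B' := by
  obtain ⟨τ, hτ⟩ := (Set.powersetCard.isPretransitive (α := α) (n := L)).exists_smul_eq
    ⟨B, hB⟩ ⟨B', hB'⟩
  rw [← show τ • B = B' from congrArg Subtype.val hτ, arcCount_smul]

lemma sum_arcCount_powersetCard {L : ℕ} (hL : L ≤ n) (hα : Fintype.card α = n) :
    ∑ B ∈ (univ : Finset α).powersetCard L, arcCount n L B = n * n ! := by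
  have hfiber (σ : ZMod n ≃ α) :
      ∑ B ∈ (univ : Finset α).powersetCard L, #{s | arc σ L s = B} = n := by
    rw [← card_eq_sum_card_fiberwise (s := (univ : Finset (ZMod n))) fun s _ =>
      mem_powersetCard_univ.2 (card_arc hL σ s), card_univ, ZMod.card]
  have hcard : Fintype.card (ZMod n ≃ α) = n ! := by
    rw [Fintype.card_equiv (Fintype.equivOfCardEq (α := ZMod n) (by rw [ZMod.card, hα])), ZMod.card]
  simp only [arcCount]
  rw [sum_comm, sum_congr rfl fun σ _ => hfiber σ, sum_const, card_univ, hcard, smul_eq_mul,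
    mul_comm]

lemma arcCount_mul_choose {L : ℕ} (hL : L ≤ n) (hα : Fintype.card α = n) {B : Finset α}
    (hB : #B = L) : arcCount n L B * n.choose L = n * n ! := by
  rw [← sum_arcCount_powersetCard hL hα, sum_congr rfl fun B' hB' =>
      arcCount_eq_of_card_eq (mem_powersetCard_univ.1 hB') hB, sum_const, card_powersetCard,
    card_univ, hα, smul_eq_mul, mul_comm]

lemma sum_card_arcStarts (L : ℕ) (ℬ : Finset (Finset α)) :
    ∑ σ : ZMod n ≃ α, #(arcStarts σ L ℬ) = ∑ B ∈ ℬ, arcCount n L B := by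
  simp only [arcCount]
  rw [sum_comm]
  refine sum_congr rfl fun σ _ => ?_
  rw [card_eq_sum_card_fiberwise (f := arc σ L) (t := ℬ) fun s hs => mem_arcStarts.1 hs]
  refine sum_congr rfl fun B hB => congrArg card ?_
  ext s
  simp only [mem_filter, mem_arcStarts, mem_univ, true_and]
  exact ⟨And.right, fun h => ⟨h ▸ hB, h⟩⟩

lemma card_div_choose_eq_sum_card_arcStarts {L : ℕ} (hL₁ : 1 ≤ L) (hL : L ≤ n)
    (hα : Fintype.card α = n) {ℬ : Finset (Finset α)} (hℬ : ∀ B ∈ ℬ, #B = L) :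
    (#ℬ : ℝ) / (n - 1).choose (L - 1) =
      (∑ σ : ZMod n ≃ α, #(arcStarts σ L ℬ) : ℕ) / (L * n !) := by
  have hsum : (∑ σ : ZMod n ≃ α, #(arcStarts σ L ℬ)) * n.choose L = #ℬ * (n * n !) := by
    rw [sum_card_arcStarts, sum_mul, sum_congr rfl fun B hB => arcCount_mul_choose hL hα (hℬ B hB),
      sum_const, smul_eq_mul]
  set F := ∑ σ : ZMod n ≃ α, #(arcStarts σ L ℬ)
  have hchoose : L * n.choose L = n * (n - 1).choose (L - 1) := by
    have := Nat.add_one_mul_choose_eq (n - 1) (L - 1)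
    rw [Nat.sub_add_cancel (hL₁.trans hL), Nat.sub_add_cancel hL₁] at this
    rw [this, mul_comm]
  have hcross : #ℬ * (L * n !) = F * (n - 1).choose (L - 1) := by
    refine Nat.eq_of_mul_eq_mul_left (NeZero.pos n) ?_
    calc n * (#ℬ * (L * n !)) = L * (#ℬ * (n * n !)) := by ring
      _ = F * (L * n.choose L) := by rw [← hsum]; ring
      _ = n * (F * (n - 1).choose (L - 1)) := by rw [hchoose]; ring
  have hpos : 0 < (n - 1).choose (L - 1) := Nat.choose_pos (by omega)
  rw [div_eq_div_iff (by positivity) (by positivity)]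
  exact_mod_cast hcross

end CyclicOrder

/-- Wang's local LYM inequality for intersecting families. -/
theorem local_LYM_intersecting (n a b : ℕ) (hab : a + b ≤ n) (h2a : 2 * a ≤ n)
    (𝒜 : Finset (Finset (Fin n)))
    (hunif : ∀ A ∈ 𝒜, A.card = a)
    (hint : ∀ A ∈ 𝒜, ∀ A' ∈ 𝒜, (A ∩ A').Nonempty) :
    (𝒜.card : ℝ) / ((n - 1).choose (a - 1)) ≤
      ((((Finset.univ : Finset (Fin n)).powersetCard (a + b)).filter
          fun B => ∃ A ∈ 𝒜, A ⊆ B).card : ℝ) / ((n - 1).choose (a + b - 1)) := by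
  obtain rfl | ha := Nat.eq_zero_or_pos a
  · have h𝒜 : 𝒜 = ∅ := eq_empty_of_forall_notMem fun A hA => by
      simpa [card_eq_zero.1 (hunif A hA)] using hint A hA A hA
    simp only [h𝒜, card_empty, Nat.cast_zero, zero_div]
    positivity
  have : NeZero n := ⟨by omega⟩
  have hshadow : ∀ B ∈ {B ∈ (univ : Finset (Fin n)).powersetCard (a + b) | ∃ A ∈ 𝒜, A ⊆ B},
      #B = a + b := fun B hB => mem_powersetCard_univ.1 (mem_filter.1 hB).1
  rw [card_div_choose_eq_sum_card_arcStarts ha (by omega) (Fintype.card_fin n) hunif,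
    card_div_choose_eq_sum_card_arcStarts (by omega) hab (Fintype.card_fin n) hshadow,
    div_le_div_iff₀ (by positivity) (by positivity)]
  have hcycles := sum_le_sum fun σ (_ : σ ∈ univ) => add_mul_card_arcStarts_le σ h2a hab hint
  rw [← mul_sum, ← mul_sum] at hcycles
  have := (Nat.cast_le (α := ℝ)).2 hcycles
  push_cast at this ⊢
  nlinarith [(Nat.cast_pos (α := ℝ)).2 (Nat.factorial_pos n)]
end

section
/- Let V = ℝ^n, let W ⊆ ⋀^r V be a subspace, and let c be an integer with 0 ≤ c ≤ n - r. Then dim(W ∧ ⋀^c V) / C(n, r+c) ≥ dim(W) / C(n, r), where W ∧ ⋀^c V denotes the linear span of all wedge products w ∧ z with w ∈ W and z ∈ ⋀^c V. -/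
/-!
Choose an inner product on `V`, so that `⋀^r V` and `⋀^(r+1) V` get the orthonormal bases
`e_S = e_{s₁} ∧ ⋯ ∧ e_{s_r}`. Right multiplication `T i` by `e_i` sends `e_S` to `±e_{S ∪ {i}}`
when `i ∉ S` and to `0` otherwise, so `∑ i, ‖T i x‖² = (n - r) ‖x‖²` on `⋀^r V` and
`∑ i, ‖(T i)† y‖² = (r + 1) ‖y‖²` on `⋀^(r+1) V`. Counting `∑ ⟪T i k, m⟫²` over orthonormal bases
`k` of `W` and `m` of `W ∧ V` in two ways gives `(n - r) dim W ≤ (r + 1) dim (W ∧ V)`, which is the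
case `c = 1` because `C(n, r + 1) (r + 1) = C(n, r) (n - r)`. The general case follows by
iterating, since `W ∧ ⋀^(c+1) V = (W ∧ ⋀^c V) ∧ V`.
-/

open Module Set Set.powersetCard
open scoped RealInnerProductSpace

theorem finrank_mul_le_finrank_iSup_map_mul {ι H₁ H₂ : Type*} [Fintype ι]
    [NormedAddCommGroup H₁] [InnerProductSpace ℝ H₁] [FiniteDimensional ℝ H₁]
    [NormedAddCommGroup H₂] [InnerProductSpace ℝ H₂] [FiniteDimensional ℝ H₂]
    (T : ι → H₁ →ₗ[ℝ] H₂) {a b : ℝ} (K : Submodule ℝ H₁)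
    (ha : ∀ x ∈ K, a * ‖x‖ ^ 2 ≤ ∑ i, ‖T i x‖ ^ 2)
    (hb : ∀ y, ∑ i, ‖LinearMap.adjoint (T i) y‖ ^ 2 ≤ b * ‖y‖ ^ 2) :
    finrank ℝ K * a ≤ finrank ℝ ↥(⨆ i, K.map (T i)) * b := by
  set M := ⨆ i, K.map (T i)
  let k := stdOrthonormalBasis ℝ K
  let m := stdOrthonormalBasis ℝ M
  have hk : Orthonormal ℝ (fun j => (k j : H₁)) := k.orthonormal.comp_linearIsometry K.subtypeₗᵢ
  have hm : Orthonormal ℝ (fun l => (m l : H₂)) := m.orthonormal.comp_linearIsometry M.subtypeₗᵢ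
  have parseval : ∀ v ∈ M, ‖v‖ ^ 2 = ∑ l, ⟪(m l : H₂), v⟫ ^ 2 := fun v hv => by
    simpa using (m.sum_sq_inner_right ⟨v, hv⟩).symm
  have bessel : ∀ u : H₁, ∑ j, ⟪(k j : H₁), u⟫ ^ 2 ≤ ‖u‖ ^ 2 := fun u => by
    simpa using hk.sum_inner_products_le (s := Finset.univ) u
  calc finrank ℝ K * a = ∑ j, a * ‖(k j : H₁)‖ ^ 2 := by
        simp only [hk.1, one_pow, mul_one, Finset.sum_const, Finset.card_univ, Fintype.card_fin,
          nsmul_eq_mul]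
    _ ≤ ∑ j, ∑ i, ‖T i (k j)‖ ^ 2 := Finset.sum_le_sum fun j _ => ha _ (k j).2
    _ = ∑ j, ∑ i, ∑ l, ⟪(m l : H₂), T i (k j)⟫ ^ 2 := by
        refine Finset.sum_congr rfl fun j _ => Finset.sum_congr rfl fun i _ => parseval _ ?_
        exact Submodule.mem_iSup_of_mem i ⟨_, (k j).2, rfl⟩
    _ = ∑ l, ∑ i, ∑ j, ⟪(k j : H₁), LinearMap.adjoint (T i) (m l)⟫ ^ 2 := by
        simp_rw [LinearMap.adjoint_inner_right, real_inner_comm (m _ : H₂)]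
        rw [Finset.sum_comm_cycle]
        exact Finset.sum_congr rfl fun l _ => Finset.sum_comm
    _ ≤ ∑ l, ∑ i, ‖LinearMap.adjoint (T i) (m l)‖ ^ 2 :=
        Finset.sum_le_sum fun l _ => Finset.sum_le_sum fun i _ => bessel _
    _ ≤ ∑ l, b * ‖(m l : H₂)‖ ^ 2 := Finset.sum_le_sum fun l _ => hb _
    _ = finrank ℝ M * b := by
        simp only [hm.1, one_pow, mul_one, Finset.sum_const, Finset.card_univ, Fintype.card_fin,
          nsmul_eq_mul]

namespace Set.powersetCard

variable {I : Type*}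

@[simp]
lemma coe_ofSingleton (i : I) : ((ofSingleton i : powersetCard I 1) : Finset I) = {i} := rfl

lemma disjUnion_ofSingleton_injective {r : ℕ} {s s' : powersetCard I r} {i : I}
    (h : Disjoint s.val (ofSingleton i).val) (h' : Disjoint s'.val (ofSingleton i).val)
    (hss' : disjUnion h = disjUnion h') : s = s' := by
  classical
  have hi : i ∉ s.val := Finset.disjoint_singleton_right.mp h
  have hi' : i ∉ s'.val := Finset.disjoint_singleton_right.mp h'
  have := congrArg (fun t : powersetCard I (r + 1) => t.val.erase i) hss'
  simp only [coe_disjUnion, Finset.disjUnion_eq_union, coe_ofSingleton, Finset.union_singleton,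
    Finset.erase_insert hi, Finset.erase_insert hi'] at this
  exact Subtype.ext this

lemma sum_dite_disjUnion_ofSingleton [Fintype I] [DecidableEq I] {A : Type*} [AddCommMonoid A] (r : ℕ) (i : I)
    (f : powersetCard I (r + 1) → A) :
    ∑ s : powersetCard I r,
        (if h : Disjoint s.val (ofSingleton i).val then f (disjUnion h) else 0) =
      ∑ t : powersetCard I (r + 1), if i ∈ t.val then f t else 0 := by
  rw [← Finset.sum_filter, ← Finset.sum_filter_of_ne
    (p := fun s : powersetCard I r => Disjoint s.val (ofSingleton i).val)
    fun s _ hs => by_contra fun h => hs (dif_neg h)]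
  refine Finset.sum_bij' (fun s hs => disjUnion (Finset.mem_filter.mp hs).2)
    (fun t ht => ⟨t.val.erase i, ?_⟩) ?_ ?_ ?_ ?_ ?_
  · rw [mem_iff, Finset.card_erase_of_mem (Finset.mem_filter.mp ht).2, card_eq, Nat.add_sub_cancel]
  · intro s hs
    simp
  · intro t ht
    simp
  · intro s hs
    have hi : i ∉ s.val := Finset.disjoint_singleton_right.mp (Finset.mem_filter.mp hs).2
    ext1
    simp [Finset.union_singleton, Finset.erase_insert hi]
  · intro t ht
    ext1
    simp [Finset.union_singleton, Finset.insert_erase (Finset.mem_filter.mp ht).2]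
  · intro s hs
    rw [dif_pos]

end Set.powersetCard

namespace ExteriorAlgebra

variable {R M : Type*} [CommRing R] [AddCommGroup M] [Module R M]

lemma mul_exteriorPower_le {r c : ℕ} {W : Submodule R (ExteriorAlgebra R M)}
    (hW : W ≤ ⋀[R]^r M) : W * ⋀[R]^c M ≤ ⋀[R]^(r + c) M := by
  rw [exteriorPower, exteriorPower, pow_add]
  exact mul_le_mul' hW le_rfl

lemma map_exteriorPower_of_surjective {N : Type*} [AddCommGroup N] [Module R N]
    {f : M →ₗ[R] N} (hf : Function.Surjective f) (k : ℕ) :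
    (⋀[R]^k M).map (map f).toLinearMap = ⋀[R]^k N := by
  rw [exteriorPower, exteriorPower, Submodule.map_pow, ι_range_map_map,
    LinearMap.range_eq_top.mpr hf, Submodule.map_top]

variable {I : Type*} [LinearOrder I]

lemma ιMulti_family_ofSingleton (v : I → M) (i : I) :
    ιMulti_family R 1 v (ofSingleton i) = ι R (v i) := by
  simp [ιMulti_family, ιMulti_apply, ofFinEmbEquiv_symm_apply, ofSingleton]

lemma ιMulti_family_mul_ι_of_mem (v : I → M) {r : ℕ} {s : powersetCard I r} {i : I}
    (hi : i ∈ s.val) : ιMulti_family R r v s * ι R (v i) = 0 := by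
  rw [← ιMulti_family_ofSingleton]
  exact ιMulti_family_mul_of_not_disjoint R v s _
    (Finset.not_disjoint_iff.mpr ⟨i, hi, Finset.mem_singleton_self i⟩)

lemma ιMulti_family_mul_ι_of_disjoint (v : I → M) {r : ℕ} {s : powersetCard I r} {i : I}
    (h : Disjoint s.val (ofSingleton i).val) :
    ιMulti_family R r v s * ι R (v i) =
      (permOfDisjoint h).sign • ιMulti_family R (r + 1) v (disjUnion h) := by
  rw [← ιMulti_family_ofSingleton]
  exact ιMulti_family_mul_of_disjoint R v s _ h

end ExteriorAlgebra

lemma OrthonormalBasis.coe_exteriorPower_apply {E I : Type*} [NormedAddCommGroup E]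
    [InnerProductSpace ℝ E] [FiniteDimensional ℝ E] [Fintype I] [LinearOrder I]
    (b : OrthonormalBasis I ℝ E) (r : ℕ) (s : powersetCard I r) :
    (b.exteriorPower r s : ExteriorAlgebra ℝ E) = ExteriorAlgebra.ιMulti_family ℝ r b s := by
  rw [← OrthonormalBasis.coe_toBasis, b.toBasis_exteriorPower, exteriorPower.coe_basis]
  simp

namespace exteriorPower

def wedgeRight {R M : Type*} [CommRing R] [AddCommGroup M] [Module R M] (r : ℕ) (v : M) :
    ⋀[R]^r M →ₗ[R] ⋀[R]^(r + 1) M :=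
  (LinearMap.mulRight R (ExteriorAlgebra.ι R v) ∘ₗ (⋀[R]^r M).subtype).codRestrict _
    fun x => by
      rw [ExteriorAlgebra.exteriorPower, pow_succ]
      exact Submodule.mul_mem_mul x.2 (LinearMap.mem_range_self _ v)

@[simp]
lemma coe_wedgeRight {R M : Type*} [CommRing R] [AddCommGroup M] [Module R M] (r : ℕ) (v : M)
    (x : ⋀[R]^r M) : (wedgeRight r v x : ExteriorAlgebra R M) = x * ExteriorAlgebra.ι R v := rfl

variable {E I : Type*} [NormedAddCommGroup E] [InnerProductSpace ℝ E] [FiniteDimensional ℝ E]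
  [Fintype I] [LinearOrder I] (b : OrthonormalBasis I ℝ E)

lemma wedgeRight_orthonormalBasis_of_mem {r : ℕ} {s : powersetCard I r} {i : I}
    (hi : i ∈ s.val) : wedgeRight r (b i) (b.exteriorPower r s) = 0 := by
  ext
  rw [coe_wedgeRight, b.coe_exteriorPower_apply, ExteriorAlgebra.ιMulti_family_mul_ι_of_mem _ hi]
  rfl

lemma wedgeRight_orthonormalBasis_of_disjoint {r : ℕ} {s : powersetCard I r} {i : I}
    (h : Disjoint s.val (ofSingleton i).val) :
    wedgeRight r (b i) (b.exteriorPower r s) =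
      (permOfDisjoint h).sign • b.exteriorPower (r + 1) (disjUnion h) := by
  ext
  rw [coe_wedgeRight, b.coe_exteriorPower_apply,
    ExteriorAlgebra.ιMulti_family_mul_ι_of_disjoint _ h, Submodule.coe_smul_of_tower,
    b.coe_exteriorPower_apply]

lemma inner_wedgeRight_orthonormalBasis (r : ℕ) (i : I) (s s' : powersetCard I r) :
    ⟪wedgeRight r (b i) (b.exteriorPower r s), wedgeRight r (b i) (b.exteriorPower r s')⟫ =
      if s = s' ∧ i ∉ s.val then 1 else 0 := by
  by_cases hi : i ∈ s.val
  · simp [wedgeRight_orthonormalBasis_of_mem b hi, hi]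
  by_cases hi' : i ∈ s'.val
  · rw [wedgeRight_orthonormalBasis_of_mem b hi', inner_zero_right, if_neg]
    rintro ⟨rfl, -⟩
    exact hi hi'
  have h : Disjoint s.val (ofSingleton i).val := Finset.disjoint_singleton_right.mpr hi
  have h' : Disjoint s'.val (ofSingleton i).val := Finset.disjoint_singleton_right.mpr hi'
  rw [wedgeRight_orthonormalBasis_of_disjoint b h, wedgeRight_orthonormalBasis_of_disjoint b h']
  by_cases hss' : s = s'
  · subst hss'
    rcases Int.units_eq_one_or (permOfDisjoint h).sign with hσ | hσ <;> simp [hσ, hi]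
  · have hne := orthonormal_iff_ite.mp (b.exteriorPower (r + 1)).orthonormal
      (disjUnion h) (disjUnion h')
    rw [if_neg (mt (disjUnion_ofSingleton_injective h h') hss')] at hne
    rw [if_neg (fun h => hss' h.1)]
    rcases Int.units_eq_one_or (permOfDisjoint h).sign with hσ | hσ <;>
    rcases Int.units_eq_one_or (permOfDisjoint h').sign with hτ | hτ <;> simp [hσ, hτ, hne]

lemma sum_norm_sq_wedgeRight (r : ℕ) (x : ⋀[ℝ]^r E) :
    ∑ i, ‖wedgeRight r (b i) x‖ ^ 2 = ((Fintype.card I : ℝ) - r) * ‖x‖ ^ 2 := by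
  set β := b.exteriorPower r
  have h_each : ∀ i, ‖wedgeRight r (b i) x‖ ^ 2 = ∑ s, if i ∉ s.val then ⟪β s, x⟫ ^ 2 else 0 := by
    intro i
    rw [← real_inner_self_eq_norm_sq]
    conv_lhs => rw [← β.sum_repr' x]
    simp only [map_sum, map_smul, sum_inner, inner_sum, real_inner_smul_left,
      real_inner_smul_right, β, inner_wedgeRight_orthonormalBasis]
    simp [ite_and, sq]
  simp_rw [h_each]
  rw [Finset.sum_comm, ← β.sum_sq_inner_right x, Finset.mul_sum]
  refine Finset.sum_congr rfl fun s _ => ?_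
  rw [Finset.sum_ite, Finset.sum_const_zero, add_zero, Finset.sum_const, nsmul_eq_mul]
  have hr : r ≤ Fintype.card I := card_eq s ▸ Finset.card_le_univ s.val
  simp [Finset.filter_not, Finset.card_sdiff, Nat.cast_sub hr]

lemma sum_norm_sq_adjoint_wedgeRight (r : ℕ) (y : ⋀[ℝ]^(r + 1) E) :
    ∑ i, ‖LinearMap.adjoint (wedgeRight r (b i)) y‖ ^ 2 = ((r : ℝ) + 1) * ‖y‖ ^ 2 := by
  set β' := b.exteriorPower (r + 1)
  have h_each : ∀ i, ‖LinearMap.adjoint (wedgeRight r (b i)) y‖ ^ 2 =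
      ∑ t, if i ∈ t.val then ⟪β' t, y⟫ ^ 2 else 0 := by
    intro i
    rw [← (b.exteriorPower r).sum_sq_inner_right, ← sum_dite_disjUnion_ofSingleton]
    refine Finset.sum_congr rfl fun s _ => ?_
    rw [LinearMap.adjoint_inner_right]
    split_ifs with h
    · rw [wedgeRight_orthonormalBasis_of_disjoint b h]
      rcases Int.units_eq_one_or (permOfDisjoint h).sign with hσ | hσ <;> simp [hσ, β']
    · rw [wedgeRight_orthonormalBasis_of_mem b (by simpa using h), inner_zero_left, sq, zero_mul]
  simp_rw [h_each]
  rw [Finset.sum_comm, ← β'.sum_sq_inner_right y, Finset.mul_sum]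
  refine Finset.sum_congr rfl fun t _ => ?_
  rw [Finset.sum_ite, Finset.sum_const_zero, add_zero, Finset.sum_const, nsmul_eq_mul]
  simp

end exteriorPower

namespace ExteriorAlgebra

open exteriorPower

theorem finrank_mul_le_finrank_mul_exteriorPower_one_mul_of_innerProductSpace {E : Type*}
    [NormedAddCommGroup E] [InnerProductSpace ℝ E] [FiniteDimensional ℝ E] {r : ℕ}
    {W : Submodule ℝ (ExteriorAlgebra ℝ E)} (hW : W ≤ ⋀[ℝ]^r E) :
    finrank ℝ W * ((finrank ℝ E : ℝ) - r) ≤ finrank ℝ ↥(W * ⋀[ℝ]^1 E) * (r + 1) := by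
  let b := stdOrthonormalBasis ℝ E
  let K := W.comap (⋀[ℝ]^r E).subtype
  have hK : finrank ℝ K = finrank ℝ W := by
    rw [← Submodule.finrank_map_subtype_eq, Submodule.map_comap_subtype, inf_eq_right.mpr hW]
  have h_le : (⨆ i, K.map (wedgeRight r (b i))).map (⋀[ℝ]^(r + 1) E).subtype ≤
      W * ⋀[ℝ]^1 E := by
    rw [Submodule.map_iSup, iSup_le_iff]
    rintro i _ ⟨_, ⟨x, hx, rfl⟩, rfl⟩
    rw [exteriorPower, pow_one]
    exact Submodule.mul_mem_mul hx (LinearMap.mem_range_self _ _)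
  have : FiniteDimensional ℝ ↥(W * ⋀[ℝ]^1 E) :=
    Submodule.finiteDimensional_of_le (mul_exteriorPower_le hW)
  have key : finrank ℝ K * ((Fintype.card (Fin (finrank ℝ E)) : ℝ) - r) ≤
      finrank ℝ ↥(⨆ i, K.map (wedgeRight r (b i))) * (r + 1) :=
    finrank_mul_le_finrank_iSup_map_mul _ K (fun x _ => (sum_norm_sq_wedgeRight b r x).ge)
      (fun y => (sum_norm_sq_adjoint_wedgeRight b r y).le)
  rw [Fintype.card_fin, hK, ← Submodule.finrank_map_subtype_eq] at key
  exact key.trans (mul_le_mul_of_nonneg_right (by exact_mod_cast Submodule.finrank_mono h_le)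
    (by positivity))

variable {M : Type*} [AddCommGroup M] [Module ℝ M] [FiniteDimensional ℝ M]

theorem finrank_mul_le_finrank_mul_exteriorPower_one_mul {r : ℕ}
    {W : Submodule ℝ (ExteriorAlgebra ℝ M)} (hW : W ≤ ⋀[ℝ]^r M) :
    finrank ℝ W * ((finrank ℝ M : ℝ) - r) ≤ finrank ℝ ↥(W * ⋀[ℝ]^1 M) * (r + 1) := by
  let e : M ≃ₗ[ℝ] EuclideanSpace ℝ (Fin (finrank ℝ M)) := LinearEquiv.ofFinrankEq _ _ (by simp)
  let φ := map (e : M →ₗ[ℝ] EuclideanSpace ℝ (Fin (finrank ℝ M)))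
  have hφ : Function.Injective φ := map_injective ⟨e.symm, by ext; simp⟩
  have finrank_map (p : Submodule ℝ (ExteriorAlgebra ℝ M)) :
      finrank ℝ ↥(p.map φ.toLinearMap) = finrank ℝ p :=
    (Submodule.equivMapOfInjective φ.toLinearMap hφ p).finrank_eq.symm
  have hWφ : W.map φ.toLinearMap ≤ ⋀[ℝ]^r _ :=
    map_exteriorPower_of_surjective e.surjective r ▸ Submodule.map_mono hW
  have := finrank_mul_le_finrank_mul_exteriorPower_one_mul_of_innerProductSpace hWφ
  rwa [finrank_euclideanSpace_fin, ← map_exteriorPower_of_surjective e.surjective 1,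
    ← Submodule.map_mul, finrank_map, finrank_map] at this

theorem finrank_div_choose_le_finrank_mul_exteriorPower_one_div_choose {r : ℕ}
    {W : Submodule ℝ (ExteriorAlgebra ℝ M)} (hW : W ≤ ⋀[ℝ]^r M) (hr : r < finrank ℝ M) :
    (finrank ℝ W : ℝ) / (finrank ℝ M).choose r ≤
      (finrank ℝ ↥(W * ⋀[ℝ]^1 M) : ℝ) / (finrank ℝ M).choose (r + 1) := by
  set n := finrank ℝ M
  have hC : (0 : ℝ) < n.choose r := by exact_mod_cast Nat.choose_pos hr.le
  have hC' : (0 : ℝ) < n.choose (r + 1) := by exact_mod_cast Nat.choose_pos hr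
  have hpascal : (n.choose (r + 1) : ℝ) * (r + 1) = n.choose r * (n - r) := by
    have h := congrArg (Nat.cast (R := ℝ)) (Nat.choose_succ_right_eq n r)
    push_cast [Nat.cast_sub hr.le] at h
    exact h
  rw [div_le_div_iff₀ hC hC']
  refine le_of_mul_le_mul_right ?_ (by positivity : (0 : ℝ) < r + 1)
  calc (finrank ℝ W : ℝ) * n.choose (r + 1) * (r + 1)
      = finrank ℝ W * ((n : ℝ) - r) * n.choose r := by rw [mul_assoc, hpascal]; ring
    _ ≤ finrank ℝ ↥(W * ⋀[ℝ]^1 M) * (r + 1) * n.choose r :=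
        mul_le_mul_of_nonneg_right (finrank_mul_le_finrank_mul_exteriorPower_one_mul hW) hC.le
    _ = _ := by ring

theorem finrank_div_choose_le_finrank_mul_exteriorPower_div_choose {r c : ℕ}
    {W : Submodule ℝ (ExteriorAlgebra ℝ M)} (hW : W ≤ ⋀[ℝ]^r M) (hc : c ≤ finrank ℝ M - r) :
    (finrank ℝ W : ℝ) / (finrank ℝ M).choose r ≤
      (finrank ℝ ↥(W * ⋀[ℝ]^c M) : ℝ) / (finrank ℝ M).choose (r + c) := by
  induction c with
  | zero => rw [exteriorPower, pow_zero, Submodule.mul_one, add_zero]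
  | succ c ih =>
    have hWc : W * ⋀[ℝ]^(c + 1) M = W * ⋀[ℝ]^c M * ⋀[ℝ]^1 M := by
      rw [exteriorPower, exteriorPower, exteriorPower, pow_succ, pow_one, mul_assoc]
    rw [hWc, ← add_assoc]
    exact (ih (by omega)).trans
      (finrank_div_choose_le_finrank_mul_exteriorPower_one_div_choose (mul_exteriorPower_le hW)
        (by omega))

end ExteriorAlgebra

/-- Scott and Wilmer's local LYM bound for subspaces of exterior powers. -/
theorem local_LYM_subspaces (n r c : ℕ) (hc : c ≤ n - r)
    (W : Submodule ℝ (ExteriorAlgebra ℝ (Fin n → ℝ)))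
    (hW : W ≤ ⋀[ℝ]^r (Fin n → ℝ)) :
    (Module.finrank ℝ ↥W : ℝ) / (n.choose r) ≤
      (Module.finrank ℝ
          ↥(Submodule.span ℝ
            {x : ExteriorAlgebra ℝ (Fin n → ℝ) |
              ∃ w ∈ W, ∃ z ∈ ⋀[ℝ]^c (Fin n → ℝ), x = w * z}) : ℝ) /
        (n.choose (r + c)) := by
  have hspan : Submodule.span ℝ {x : ExteriorAlgebra ℝ (Fin n → ℝ) |
      ∃ w ∈ W, ∃ z ∈ ⋀[ℝ]^c (Fin n → ℝ), x = w * z} = W * ⋀[ℝ]^c (Fin n → ℝ) := by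
    rw [Submodule.mul_eq_span_mul_set]
    congr 1
    ext x
    simp [Set.mem_mul, eq_comm]
  rw [hspan]
  simpa using ExteriorAlgebra.finrank_div_choose_le_finrank_mul_exteriorPower_div_choose hW
    (by simpa using hc)
end

section
/- Let V = ℝ^n and let U_1, ..., U_m be proper linear subspaces of V. Then for every integer k with 0 ≤ k ≤ n there exists a k-dimensional subspace V' of V such that dim(U_i ∩ V') = max{dim(U_i) + k - n, 0} for every 1 ≤ i ≤ m. -/
/-!
Build `V'` one vector at a time, keeping `dim (Uᵢ + V') = min (dim Uᵢ + k) n` for every `i`.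
Over an infinite field a vector space is not a finite union of proper subspaces, so there is a
vector outside `V'` and outside every proper `Uᵢ + V'`; adjoining it raises each of these
dimensions by one, until it reaches `n`. The intersections are then read off from
`dim (Uᵢ + V') + dim (Uᵢ ∩ V') = dim Uᵢ + dim V'`.
-/

open Module Submodule

namespace Subspace

variable {K E : Type*} [DivisionRing K] [AddCommGroup E] [Module K E]

theorem exists_forall_notMem_of_ne_top [Infinite K] {ι : Type*} [Finite ι]
    (p : ι → Submodule K E) : ∃ x : E, ∀ i, p i ≠ ⊤ → x ∉ p i := by
  by_contra! hcover
  have hunion : ⋃ i : {i // p i ≠ ⊤}, (p i : Set E) = Set.univ :=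
    Set.eq_univ_of_forall fun x ↦ by
      obtain ⟨i, hi, hx⟩ := hcover x
      exact Set.mem_iUnion.mpr ⟨⟨i, hi⟩, hx⟩
  obtain ⟨⟨i, hi⟩, htop⟩ := exists_eq_top_of_iUnion_eq_univ hunion
  exact hi htop

variable [FiniteDimensional K E]

theorem finrank_sup_span_singleton_eq_min {W : Submodule K E} {v : E} (hv : W ≠ ⊤ → v ∉ W)
    {d : ℕ} (hW : finrank K W = min d (finrank K E)) :
    finrank K ↥(W ⊔ span K {v}) = min (d + 1) (finrank K E) := by
  by_cases htop : W = ⊤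
  · rw [htop, finrank_top] at hW
    rw [htop, top_sup_eq, finrank_top]
    omega
  · have := finrank_lt htop
    rw [finrank_sup_span_singleton (hv htop)]
    omega

variable [Infinite K] {ι : Type*} [Finite ι] (U : ι → Submodule K E)

theorem exists_finrank_eq_forall_finrank_sup_eq {k : ℕ} (hk : k ≤ finrank K E) :
    ∃ V : Submodule K E, finrank K V = k ∧
      ∀ i, finrank K ↥(U i ⊔ V) = min (finrank K (U i) + k) (finrank K E) := by
  induction k with
  | zero => exact ⟨⊥, finrank_bot K E, fun i ↦ by
      rw [sup_bot_eq, add_zero, min_eq_left (U i).finrank_le]⟩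
  | succ k ih =>
    obtain ⟨V, hVk, hV⟩ := ih (by omega)
    obtain ⟨x, hx⟩ := exists_forall_notMem_of_ne_top fun o : Option ι ↦ o.elim V (U · ⊔ V)
    refine ⟨V ⊔ span K {x}, ?_, fun i ↦ ?_⟩
    · have := finrank_sup_span_singleton_eq_min (W := V) (d := k) (hx none) (by omega)
      omega
    · rw [← sup_assoc, ← add_assoc]
      exact finrank_sup_span_singleton_eq_min (W := U i ⊔ V) (hx (some i)) (hV i)

theorem exists_finrank_eq_forall_finrank_inf_eq {k : ℕ} (hk : k ≤ finrank K E) :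
    ∃ V : Submodule K E, finrank K V = k ∧
      ∀ i, finrank K ↥(U i ⊓ V) = finrank K (U i) + k - finrank K E := by
  obtain ⟨V, hVk, hV⟩ := exists_finrank_eq_forall_finrank_sup_eq U hk
  refine ⟨V, hVk, fun i ↦ ?_⟩
  have := finrank_sup_add_finrank_inf_eq (U i) V
  have := hV i
  omega

end Subspace

theorem furedi_general_position_general (n m : ℕ) (U : Fin m → Submodule ℝ (Fin n → ℝ))
    (k : ℕ) (hk : k ≤ n) :
    ∃ V' : Submodule ℝ (Fin n → ℝ), Module.finrank ℝ ↥V' = k ∧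
      ∀ i, Module.finrank ℝ ↥(U i ⊓ V') = Module.finrank ℝ ↥(U i) + k - n := by
  simpa only [finrank_fin_fun] using
    Subspace.exists_finrank_eq_forall_finrank_inf_eq U (k := k) (by simpa using hk)

/-- Füredi's general position lemma for real vector spaces: given proper subspaces
`U₁, …, Uₘ` of `ℝⁿ` and `k ≤ n`, there is a `k`-dimensional subspace `V'` with
`dim (Uᵢ ∩ V') = max (dim Uᵢ + k - n) 0` for every `i` (truncated subtraction on `ℕ`). -/
theorem furedi_general_position (n m : ℕ) (U : Fin m → Submodule ℝ (Fin n → ℝ))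
    (hU : ∀ i, U i ≠ ⊤) (k : ℕ) (hk : k ≤ n) :
    ∃ V' : Submodule ℝ (Fin n → ℝ), Module.finrank ℝ ↥V' = k ∧
      ∀ i, Module.finrank ℝ ↥(U i ⊓ V') = Module.finrank ℝ ↥(U i) + k - n :=
  furedi_general_position_general n m U k hk
end

section
/- Let V = ℝ^n with 0 < 2r < n, and let v be a nonzero vector of V. Then the subspace {v ∧ z : z ∈ ⋀^{r-1} V} of ⋀^r V is self-annihilating and has dimension C(n-1, r-1). -/
/-!
Pick a basis `b` of `V` with `b i = v`. The monomials `e_t`, `#t = r - 1`, span `⋀^(r-1) V`, and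
`v ∧ e_t` is `0` when `i ∈ t` and `± e_(t ∪ {i})` otherwise. Hence the image of `v ∧ ·` is free on
the degree-`r` monomials through `i`, of which there are `C(n-1, r-1)`. Self-annihilation holds
because `v ∧ x ∧ v = 0` for every `x`: `v` anticommutes with every vector and `v ∧ v = 0`.
-/

open Module

theorem Module.Basis.exists_fin_apply_eq (K : Type*) {V : Type*} [DivisionRing K]
    [AddCommGroup V] [Module K V] [FiniteDimensional K V] {v : V} (hv : v ≠ 0) :
    ∃ (b : Basis (Fin (finrank K V)) K V) (i : Fin (finrank K V)), b i = v := by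
  have hli : LinearIndepOn K id {v} := LinearIndepOn.singleton hv
  let e := (Basis.extend hli).indexEquiv (finBasis K V)
  exact ⟨(Basis.extend hli).reindex e, e ⟨v, hli.subset_extend _ rfl⟩, by simp⟩

namespace ExteriorAlgebra

variable {R M : Type*} [CommRing R] [AddCommGroup M] [Module R M]

theorem ι_mul_mul_ι_eq_zero (v : M) (x : ExteriorAlgebra R M) : ι R v * x * ι R v = 0 := by
  induction x using CliffordAlgebra.left_induction with
  | algebraMap r => rw [← Algebra.commutes r (ι R v), mul_assoc, ι_sq_zero, mul_zero]
  | add x y hx hy => rw [mul_add, add_mul, hx, hy, add_zero]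
  | ι_mul x m hx =>
    have anticomm : ι R v * ι R m = -(ι R m * ι R v) :=
      eq_neg_of_add_eq_zero_left (ι_add_mul_swap v m)
    rw [← mul_assoc, anticomm, neg_mul, neg_mul, mul_assoc, mul_assoc, ← mul_assoc _ x, hx,
      mul_zero, neg_zero]

theorem ι_mul_mem_exteriorPower (v : M) {k : ℕ} {x : ExteriorAlgebra R M}
    (hx : x ∈ ⋀[R]^k M) : ι R v * x ∈ ⋀[R]^(k + 1) M := by
  have hv : ι R v ∈ ⋀[R]^1 M := by
    rw [exteriorPower, pow_one]
    exact LinearMap.mem_range_self _ v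
  rw [add_comm]
  exact SetLike.mul_mem_graded hv hx

variable {I : Type*} [LinearOrder I] (b : Basis I R M)

open Set.powersetCard

theorem basis_apply_singleton (i : I) : b.ExteriorAlgebra {i} = ι R (b i) := by
  rw [basis_apply_ofCard b (Finset.card_singleton i), ιMulti_family, ιMulti_succ_apply,
    ιMulti_zero_apply, mul_one]
  have h0 : ofFinEmbEquiv.symm (ofCard (Finset.card_singleton i)) 0 ∈ ({i} : Finset I) :=
    (mem_range_ofFinEmbEquiv_symm_iff_mem (ofCard (Finset.card_singleton i)) _).1 ⟨0, rfl⟩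
  rw [Function.comp_apply, Finset.mem_singleton.1 h0]

theorem ι_mul_basis_of_mem {i : I} {t : Finset I} (hi : i ∈ t) :
    ι R (b i) * b.ExteriorAlgebra t = 0 := by
  rw [← basis_apply_singleton]
  exact basis_mul_of_not_disjoint b (ofCard (Finset.card_singleton i)) (ofCard rfl)
    (Finset.not_disjoint_iff.2 ⟨i, Finset.mem_singleton_self i, hi⟩)

theorem exists_ι_mul_basis_of_notMem {i : I} {t : Finset I} (hi : i ∉ t) :
    ∃ u : Rˣ, ι R (b i) * b.ExteriorAlgebra t = u • b.ExteriorAlgebra (insert i t) := by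
  have hdisj : Disjoint (ofCard (Finset.card_singleton i)).val
      (ofCard rfl : Set.powersetCard I t.card).val :=
    Finset.disjoint_singleton_left.2 hi
  refine ⟨Units.map (Int.castRingHom R).toMonoidHom (permOfDisjoint hdisj).sign, ?_⟩
  rw [← basis_apply_singleton]
  refine (basis_mul_of_disjoint b _ _ hdisj).trans ?_
  rw [Units.smul_def, Units.smul_def, Units.coe_map, ← Int.cast_smul_eq_zsmul R, coe_disjUnion,
    Finset.disjUnion_eq_union, Finset.insert_eq]
  rfl

theorem linearIndependent_ι_mul_basis (i : I) :
    LinearIndependent R fun t : {t : Finset I // i ∉ t} => ι R (b i) * b.ExteriorAlgebra t := by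
  choose u hu using fun t : {t : Finset I // i ∉ t} => exists_ι_mul_basis_of_notMem b t.2
  have hinsert : Function.Injective fun t : {t : Finset I // i ∉ t} => insert i t.1 :=
    fun s t hst => Subtype.ext <| by
      simpa [Finset.erase_insert s.2, Finset.erase_insert t.2] using
        congrArg (Finset.erase · i) hst
  rw [show (fun t : {t : Finset I // i ∉ t} => ι R (b i) * b.ExteriorAlgebra t) =
      u • (b.ExteriorAlgebra ∘ fun t => insert i t.1) from funext hu]
  exact (b.ExteriorAlgebra.linearIndependent.comp _ hinsert).units_smul u

theorem map_mulLeft_ι_basis_exteriorPower (i : I) (k : ℕ) :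
    (⋀[R]^k M).map (LinearMap.mulLeft R (ι R (b i))) =
      Submodule.span R (Set.range fun t : {t : Finset I // t.card = k ∧ i ∉ t} =>
        ι R (b i) * b.ExteriorAlgebra t) := by
  rw [← exteriorPower.ιMulti_family_span_fixedDegree_of_span R b.span_eq, Submodule.map_span]
  apply le_antisymm
  · rw [Submodule.span_le]
    rintro _ ⟨_, ⟨s, rfl⟩, rfl⟩
    rw [LinearMap.mulLeft_apply, ← basis_apply_powersetCard]
    by_cases hi : i ∈ s.val
    · rw [ι_mul_basis_of_mem b hi]
      exact Submodule.zero_mem _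
    · exact Submodule.subset_span ⟨⟨s, s.2, hi⟩, rfl⟩
  · refine Submodule.span_mono ?_
    rintro _ ⟨t, rfl⟩
    exact ⟨_, ⟨ofCard t.2.1, (basis_apply_ofCard b t.2.1).symm⟩, rfl⟩

theorem finrank_map_mulLeft_ι_basis_exteriorPower [Nontrivial R] [Fintype I] (i : I) (k : ℕ) :
    finrank R ((⋀[R]^k M).map (LinearMap.mulLeft R (ι R (b i)))) =
      (Fintype.card I - 1).choose k := by
  let f : {t : Finset I // t.card = k ∧ i ∉ t} → {t : Finset I // i ∉ t} :=
    fun t => ⟨t.1, t.2.2⟩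
  have hf : Function.Injective f := fun s t hst => Subtype.ext (congrArg Subtype.val hst :)
  have hli : LinearIndependent R fun t : {t : Finset I // t.card = k ∧ i ∉ t} =>
      ι R (b i) * b.ExteriorAlgebra t :=
    (linearIndependent_ι_mul_basis b i).comp f hf
  have hcount : Finset.univ.filter (fun t : Finset I => t.card = k ∧ i ∉ t) =
      (Finset.univ.erase i).powersetCard k := by
    ext t
    simp [Finset.mem_powersetCard, Finset.subset_erase, and_comm]
  rw [map_mulLeft_ι_basis_exteriorPower, finrank_span_eq_card hli, Fintype.card_subtype, hcount,
    Finset.card_powersetCard, Finset.card_erase_of_mem (Finset.mem_univ i), Finset.card_univ]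

theorem finrank_map_mulLeft_ι_exteriorPower {K V : Type*} [Field K] [AddCommGroup V]
    [Module K V] [FiniteDimensional K V] {v : V} (hv : v ≠ 0) (k : ℕ) :
    finrank K ((⋀[K]^k V).map (LinearMap.mulLeft K (ι K v))) = (finrank K V - 1).choose k := by
  obtain ⟨b, i, rfl⟩ := Basis.exists_fin_apply_eq K hv
  rw [finrank_map_mulLeft_ι_basis_exteriorPower, Fintype.card_fin]

end ExteriorAlgebra

open ExteriorAlgebra

theorem full_star_self_annihilating_general (n r : ℕ) (hr : 0 < 2 * r)
    (v : Fin n → ℝ) (hv : v ≠ 0)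
    (W : Submodule ℝ (ExteriorAlgebra ℝ (Fin n → ℝ)))
    (hWdef : W = Submodule.map (LinearMap.mulLeft ℝ (ExteriorAlgebra.ι ℝ v))
      (⋀[ℝ]^(r - 1) (Fin n → ℝ))) :
    W ≤ ⋀[ℝ]^r (Fin n → ℝ) ∧ (∀ x ∈ W, ∀ y ∈ W, x * y = 0) ∧
      Module.finrank ℝ ↥W = (n - 1).choose (r - 1) := by
  obtain ⟨k, rfl⟩ : ∃ k, r = k + 1 := ⟨r - 1, by omega⟩
  subst hWdef
  rw [Nat.add_sub_cancel]
  refine ⟨?_, ?_, ?_⟩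
  · rintro _ ⟨z, hz, rfl⟩
    exact ι_mul_mem_exteriorPower v hz
  · rintro _ ⟨z, -, rfl⟩ _ ⟨y, -, rfl⟩
    rw [LinearMap.mulLeft_apply, LinearMap.mulLeft_apply, ← mul_assoc, ι_mul_mul_ι_eq_zero,
      zero_mul]
  · rw [finrank_map_mulLeft_ι_exteriorPower hv, Module.finrank_fin_fun]

/-- The extremal example for the Scott–Wilmer bound: for `0 < 2r < n` and a nonzero
vector `v ∈ ℝⁿ`, the subspace `{v ∧ z : z ∈ ⋀^(r-1) ℝⁿ}` of `⋀^r ℝⁿ` is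
self-annihilating and has dimension `C(n-1, r-1)`. -/
theorem full_star_self_annihilating (n r : ℕ) (hr : 0 < 2 * r) (hrn : 2 * r < n)
    (v : Fin n → ℝ) (hv : v ≠ 0)
    (W : Submodule ℝ (ExteriorAlgebra ℝ (Fin n → ℝ)))
    (hWdef : W = Submodule.map (LinearMap.mulLeft ℝ (ExteriorAlgebra.ι ℝ v))
      (⋀[ℝ]^(r - 1) (Fin n → ℝ))) :
    W ≤ ⋀[ℝ]^r (Fin n → ℝ) ∧ (∀ x ∈ W, ∀ y ∈ W, x * y = 0) ∧
      Module.finrank ℝ ↥W = (n - 1).choose (r - 1) :=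
  full_star_self_annihilating_general n r hr v hv W hWdef
end

section
/- Let A_1, ..., A_m and B_1, ..., B_m be linear subspaces of ℝ^N with dim(A_i) + dim(B_i) = N for all i, such that A_i ∩ B_i = {0} for all 1 ≤ i ≤ m and dim(A_i ∩ B_j) > 0 for all 1 ≤ i < j ≤ m. Then the vectors ∧A_1, ∧A_2, ..., ∧A_m are linearly independent in the exterior algebra of ℝ^N, where for a k-dimensional subspace T with basis {v_1,...,v_k}, ∧T denotes v_1 ∧ v_2 ∧ ... ∧ v_k. -/
/-!
Pair `∧Aᵢ` with the wedge `∧Bᵢ` of a basis of `Bᵢ`. The wedge of linearly independent vectors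
is nonzero (project onto their span and evaluate the determinant of that basis), so
`(∧A) ∧ (∧B)` vanishes exactly when `A ∩ B ≠ 0`. Hence right multiplication by `∧Bⱼ` kills `∧Aᵢ`
for `i < j` but not `∧Aⱼ`, and such a triangular pattern forces linear independence.
-/

open ExteriorAlgebra Module Submodule Set

section Ring

variable {R M : Type*} [Ring R] [AddCommGroup M] [Module R M]

theorem linearIndependent_fin_append_iff {p q : ℕ} {a : Fin p → M} {b : Fin q → M} :
    LinearIndependent R (Fin.append a b) ↔
      LinearIndependent R a ∧ LinearIndependent R b ∧
        Disjoint (span R (range a)) (span R (range b)) := by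
  rw [← linearIndependent_equiv finSumFinEquiv, linearIndependent_sum]
  simp [Function.comp_def]

theorem Module.Basis.linearIndependent_coe {ι : Type*} {W : Submodule R M} (b : Basis ι R W) :
    LinearIndependent R fun i => (b i : M) :=
  b.linearIndependent.map' W.subtype W.ker_subtype

theorem Module.Basis.span_range_coe {ι : Type*} {W : Submodule R M} (b : Basis ι R W) :
    span R (range fun i => (b i : M)) = W := by
  rw [show (fun i => (b i : M)) = W.subtype ∘ b from rfl, range_comp, ← map_span, b.span_eq,
    map_subtype_top]

theorem linearIndependent_of_triangular [IsDomain R] {N ι : Type*} [AddCommGroup N] [Module R N]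
    [Module.IsTorsionFree R N] [LinearOrder ι] [Fintype ι] {v : ι → M} (f : ι → M →ₗ[R] N)
    (h_lt : ∀ i j, i < j → f j (v i) = 0) (h_diag : ∀ i, f i (v i) ≠ 0) :
    LinearIndependent R v := by
  classical
  rw [Fintype.linearIndependent_iff]
  intro g hg
  by_contra! h
  obtain ⟨j, hj, hmax⟩ := (Finset.univ.filter fun i => g i ≠ 0).exists_max_image id
    (by simpa [Finset.Nonempty] using h)
  simp only [Finset.mem_filter, Finset.mem_univ, true_and, id] at hj hmax
  have hfj : f j (∑ i, g i • v i) = g j • f j (v j) := by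
    simp only [map_sum, map_smul]
    refine Finset.sum_eq_single j (fun i _ hij => ?_) (fun hj => absurd (Finset.mem_univ j) hj)
    by_cases hgi : g i = 0
    · simp [hgi]
    · rw [h_lt i j ((hmax i hgi).lt_of_ne hij), smul_zero]
  rw [hg, map_zero] at hfj
  exact smul_ne_zero hj (h_diag j) hfj.symm

end Ring

section Field

variable {K M : Type*} [Field K] [AddCommGroup M] [Module K M]

theorem ιMulti_ne_zero_of_linearIndependent {n : ℕ} {v : Fin n → M}
    (hv : LinearIndependent K v) : ιMulti K n v ≠ 0 := by
  classical
  let b := Basis.span hv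
  obtain ⟨f, hf⟩ := (span K (range v)).subtype.exists_leftInverse_of_injective (ker_subtype _)
  have hfv : (fun i => f (v i)) = b := funext fun i => by
    simpa [b] using LinearMap.congr_fun hf (b i)
  let φ : ∀ k, M [⋀^Fin k]→ₗ[K] K := Function.update 0 n (b.det.compLinearMap f)
  intro h
  have := congrArg (liftAlternating φ) h
  rw [liftAlternating_apply_ιMulti, map_zero] at this
  rw [show φ n = b.det.compLinearMap f from Function.update_self ..,
    AlternatingMap.compLinearMap_apply, hfv, b.det_self] at this
  exact one_ne_zero this

theorem ιMulti_mul_ιMulti_eq_zero_iff {p q : ℕ} {a : Fin p → M} {b : Fin q → M}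
    (ha : LinearIndependent K a) (hb : LinearIndependent K b) :
    ιMulti K p a * ιMulti K q b = 0 ↔ ¬Disjoint (span K (range a)) (span K (range b)) := by
  rw [ιMulti_mul_ιMulti]
  refine ⟨fun h hd => ?_, fun hd => ?_⟩
  · exact ιMulti_ne_zero_of_linearIndependent (linearIndependent_fin_append_iff.2 ⟨ha, hb, hd⟩) h
  · exact (ιMulti K _).map_linearDependent _ fun h => hd (linearIndependent_fin_append_iff.1 h).2.2

theorem ιMulti_basis_mul_ιMulti_basis_eq_zero_iff {p q : ℕ} {A B : Submodule K M}
    (bA : Basis (Fin p) K A) (bB : Basis (Fin q) K B) :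
    ιMulti K p (fun i => (bA i : M)) * ιMulti K q (fun i => (bB i : M)) = 0 ↔ A ⊓ B ≠ ⊥ := by
  rw [ιMulti_mul_ιMulti_eq_zero_iff bA.linearIndependent_coe bB.linearIndependent_coe,
    bA.span_range_coe, bB.span_range_coe, disjoint_iff]

end Field

theorem triangular_criterion_wedge_general (N m : ℕ)
    (A B : Fin m → Submodule ℝ (Fin N → ℝ))
    (hmeet : ∀ i, A i ⊓ B i = ⊥)
    (hcross : ∀ i j, i < j → 0 < Module.finrank ℝ ↥(A i ⊓ B j))
    (bas : ∀ i, Module.Basis (Fin (Module.finrank ℝ ↥(A i))) ℝ ↥(A i)) :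
    LinearIndependent ℝ fun i =>
      ExteriorAlgebra.ιMulti ℝ (Module.finrank ℝ ↥(A i))
        fun j => ((bas i j : ↥(A i)) : Fin N → ℝ) := by
  let wedgeB j := ιMulti ℝ _ fun k => (finBasis ℝ (B j) k : Fin N → ℝ)
  refine linearIndependent_of_triangular (fun j => LinearMap.mulRight ℝ (wedgeB j))
    (fun i j hij => ?_) (fun i => ?_)
  · exact (ιMulti_basis_mul_ιMulti_basis_eq_zero_iff (bas i) (finBasis ℝ (B j))).2 fun h =>
      (hcross i j hij).ne' (by rw [h, finrank_bot])
  · exact (ιMulti_basis_mul_ιMulti_basis_eq_zero_iff (bas i) (finBasis ℝ (B i))).not.2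
      (not_not.2 (hmeet i))

/-- Triangular criterion via wedge products: if `dim Aᵢ + dim Bᵢ = N`,
`Aᵢ ∩ Bᵢ = {0}` for all `i` and `dim (Aᵢ ∩ Bⱼ) > 0` for `i < j`, then the wedges
`∧A₁, …, ∧Aₘ` (formed from any bases of the `Aᵢ`) are linearly independent in the
exterior algebra of `ℝᴺ`. -/
theorem triangular_criterion_wedge (N m : ℕ)
    (A B : Fin m → Submodule ℝ (Fin N → ℝ))
    (hdim : ∀ i, Module.finrank ℝ ↥(A i) + Module.finrank ℝ ↥(B i) = N)
    (hmeet : ∀ i, A i ⊓ B i = ⊥)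
    (hcross : ∀ i j, i < j → 0 < Module.finrank ℝ ↥(A i ⊓ B j))
    (bas : ∀ i, Module.Basis (Fin (Module.finrank ℝ ↥(A i))) ℝ ↥(A i)) :
    LinearIndependent ℝ fun i =>
      ExteriorAlgebra.ιMulti ℝ (Module.finrank ℝ ↥(A i))
        fun j => ((bas i j : ↥(A i)) : Fin N → ℝ) :=
  triangular_criterion_wedge_general N m A B hmeet hcross bas
end
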